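/- arXiv:0910.2770 — 8 statements merged into one kernel-verified Lean document; each statement's English description precedes it below -/
import Mathlib

section
/- Let p < q be distinct primes and write Φ_{pq}(x) = Σ_m d_m x^m. For 0 ≤ m ≤ φ(pq), one has d_m = 1 if and only if m = up + vq for some integers u ∈ [0, p_q* − 1] and v ∈ [0, q_p* − 1]. (Lam–Leung, part A.) -/
open Polynomial Finset

lemma lamleung_sumpow_mul (n k : ℕ) :
    (∑ i ∈ Finset.range n, (X:ℤ[X])^(i*k)) * ((X:ℤ[X])^k - 1) = X^(n*k) - 1 := by
  have h := geom_sum_mul ((X:ℤ[X])^k) n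
  simpa [← pow_mul, mul_comm] using h

lemma lamleung_uniq (p q : ℕ) (hp : p.Prime) (hq : q.Prime) (hpq : p < q) (i j i' j' : ℕ)
    (hi : i < q) (hi' : i' < q) (h : i*p + j*q = i'*p + j'*q) : i = i' ∧ j = j' := by
  have hZ : (i:ℤ)*p + j*q = (i':ℤ)*p + j'*q := by exact_mod_cast congrArg (Nat.cast : ℕ → ℤ) h
  have hdvd : (q:ℤ) ∣ ((i:ℤ) - i') * p := ⟨(j':ℤ) - j, by linear_combination hZ⟩
  have hq' : Prime (q:ℤ) := Nat.prime_iff_prime_int.1 hq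
  rcases hq'.2.2 _ _ hdvd with hd | hd
  · have hia : (i:ℤ) < q := by exact_mod_cast hi
    have hib : (i':ℤ) < q := by exact_mod_cast hi'
    have h0 : (i:ℤ) - i' = 0 := Int.eq_zero_of_abs_lt_dvd hd
      (abs_lt.2 ⟨by linarith [Int.ofNat_nonneg i, Int.ofNat_nonneg i'], by
        linarith [Int.ofNat_nonneg i, Int.ofNat_nonneg i']⟩)
    have hii : i = i' := by omega
    subst hii
    refine ⟨rfl, ?_⟩
    have : j * q = j' * q := by omega
    exact Nat.eq_of_mul_eq_mul_right hq.pos this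
  · exfalso
    rw [Int.natCast_dvd_natCast] at hd
    have := (Nat.prime_dvd_prime_iff_eq hq hp).1 hd
    omega

lemma lamleung_key (p q pqs qps : ℕ) (hp : p.Prime) (hq : q.Prime) (hpq : p < q)
    (hpqs1 : 0 < pqs) (hpqs2 : pqs < q) (hpqs3 : p * pqs ≡ 1 [MOD q])
    (hqps1 : 0 < qps) (hqps2 : qps < p) (hqps3 : q * qps ≡ 1 [MOD p]) :
    p * pqs + q * qps = p * q + 1 := by
  have hco : Nat.Coprime p q := (Nat.coprime_primes hp hq).2 (by omega)
  have h1 : p * pqs + q * qps ≡ 1 [MOD p] := by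
    have h0 : p * pqs + q * qps ≡ 0 + 1 [MOD p] :=
      Nat.ModEq.add ((Nat.modEq_zero_iff_dvd).2 ⟨pqs, rfl⟩) hqps3
    simpa using h0
  have h2 : p * pqs + q * qps ≡ 1 + 0 [MOD q] :=
    Nat.ModEq.add hpqs3 ((Nat.modEq_zero_iff_dvd).2 ⟨qps, rfl⟩)
  simp only [add_zero] at h2
  have h3 : p * pqs + q * qps ≡ 1 [MOD p * q] :=
    (Nat.modEq_and_modEq_iff_modEq_mul hco).1 ⟨h1, h2⟩
  have h4 : p * q ∣ (p * pqs + q * qps) - 1 := (Nat.modEq_iff_dvd' (by nlinarith)).1 h3.symm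
  obtain ⟨k, hk⟩ := h4
  have hb1 : p * pqs < p * q := Nat.mul_lt_mul_of_le_of_lt (le_refl p) hpqs2 hp.pos
  have hb2 : q * qps < p * q := by
    rw [mul_comm p q]; exact Nat.mul_lt_mul_of_le_of_lt (le_refl q) hqps2 hq.pos
  have hge1 : 1 ≤ p * pqs := Nat.mul_pos hp.pos hpqs1
  have hge2 : 1 ≤ q * qps := Nat.mul_pos hq.pos hqps1
  rcases k with _ | _ | k
  · omega
  · omega
  · have h5 : p * q * 2 ≤ p * q * (k + 2) := Nat.mul_le_mul_left _ (by omega)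
    have h6 : p * q * (k + 1 + 1) = p * q * (k + 2) := by ring
    omega

lemma lamleung_poly_id (p q pqs qps : ℕ) (hp : 0 < p) (hq : 0 < q)
    (hpqs2 : pqs < q) (hqps2 : qps < p)
    (hkey : p * pqs + q * qps = p * q + 1) (hpqs1 : 0 < pqs) (hqps1 : 0 < qps) :
    ((∑ i ∈ Finset.range pqs, (X:ℤ[X])^(i*p)) * (∑ j ∈ Finset.range qps, (X:ℤ[X])^(j*q))
      - X * ((∑ i ∈ Finset.range (q-pqs), (X:ℤ[X])^(i*p)) * (∑ j ∈ Finset.range (p-qps), (X:ℤ[X])^(j*q))))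
      * (((X:ℤ[X])^p - 1) * ((X:ℤ[X])^q - 1))
    = (X^(p*q) - 1) * (X - 1) := by
  obtain ⟨a', ha'⟩ : ∃ a', p * pqs = a' + 1 := ⟨p * pqs - 1, by
    have : 1 ≤ p * pqs := Nat.mul_pos hp hpqs1; omega⟩
  obtain ⟨b', hb'⟩ : ∃ b', q * qps = b' + 1 := ⟨q * qps - 1, by
    have : 1 ≤ q * qps := Nat.mul_pos hq hqps1; omega⟩
  have h1 : (q - pqs) * p = b' := by
    rw [Nat.sub_mul]
    have h2 : pqs * p ≤ q * p := Nat.mul_le_mul_right p (le_of_lt hpqs2)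
    have e1 : pqs * p = p * pqs := mul_comm _ _
    have e2 : q * p = p * q := mul_comm _ _
    omega
  have h2 : (p - qps) * q = a' := by
    rw [Nat.sub_mul]
    have h3 : qps * q ≤ p * q := Nat.mul_le_mul_right q (le_of_lt hqps2)
    have : qps * q = q * qps := mul_comm _ _
    omega
  have hpq' : p * q = a' + b' + 1 := by omega
  calc ((∑ i ∈ Finset.range pqs, (X:ℤ[X])^(i*p)) * (∑ j ∈ Finset.range qps, (X:ℤ[X])^(j*q))
      - X * ((∑ i ∈ Finset.range (q-pqs), (X:ℤ[X])^(i*p)) * (∑ j ∈ Finset.range (p-qps), (X:ℤ[X])^(j*q))))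
      * (((X:ℤ[X])^p - 1) * ((X:ℤ[X])^q - 1))
      = ((∑ i ∈ Finset.range pqs, (X:ℤ[X])^(i*p)) * ((X:ℤ[X])^p - 1))
        * ((∑ j ∈ Finset.range qps, (X:ℤ[X])^(j*q)) * ((X:ℤ[X])^q - 1))
        - X * (((∑ i ∈ Finset.range (q-pqs), (X:ℤ[X])^(i*p)) * ((X:ℤ[X])^p - 1))
          * ((∑ j ∈ Finset.range (p-qps), (X:ℤ[X])^(j*q)) * ((X:ℤ[X])^q - 1))) := by ring
    _ = (X^(pqs*p) - 1) * (X^(qps*q) - 1) - X * ((X^((q-pqs)*p) - 1) * (X^((p-qps)*q) - 1)) := by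
        rw [lamleung_sumpow_mul, lamleung_sumpow_mul, lamleung_sumpow_mul, lamleung_sumpow_mul]
    _ = (X^(a'+1) - 1) * (X^(b'+1) - 1) - X * ((X^b' - 1) * (X^a' - 1)) := by
        rw [h1, h2, mul_comm pqs p, mul_comm qps q, ha', hb']
    _ = (X^(a'+b'+1) - 1) * (X - 1) := by ring
    _ = (X^(p*q) - 1) * (X - 1) := by rw [hpq']

lemma lamleung_cyc_id (p q : ℕ) (hp : p.Prime) (hq : q.Prime) (hpq : p < q) :
    cyclotomic (p*q) ℤ * (((X:ℤ[X])^p - 1) * ((X:ℤ[X])^q - 1)) = (X^(p*q) - 1) * (X - 1) := by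
  have hp1 : 1 < p := hp.one_lt
  have hq1 : 1 < q := hq.one_lt
  have hpqpos : 0 < p*q := by positivity
  have hdiv : (p*q).divisors = {1, p, q, p*q} := by
    rw [Nat.divisors_mul, hp.divisors, hq.divisors]
    ext d
    simp only [Finset.mem_mul, Finset.mem_insert, Finset.mem_singleton]
    constructor
    · rintro ⟨a, (rfl|rfl), b, (rfl|rfl), rfl⟩ <;> simp
    · rintro (rfl|rfl|rfl|rfl)
      · exact ⟨1, Or.inl rfl, 1, Or.inl rfl, by ring⟩
      · exact ⟨d, Or.inr rfl, 1, Or.inl rfl, by ring⟩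
      · exact ⟨1, Or.inl rfl, d, Or.inr rfl, by ring⟩
      · exact ⟨p, Or.inr rfl, q, Or.inr rfl, rfl⟩
  have ep : ∏ d ∈ p.divisors, cyclotomic d ℤ = X^p - 1 :=
    prod_cyclotomic_eq_X_pow_sub_one hp.pos ℤ
  have eq' : ∏ d ∈ q.divisors, cyclotomic d ℤ = X^q - 1 :=
    prod_cyclotomic_eq_X_pow_sub_one hq.pos ℤ
  have epq : ∏ d ∈ (p*q).divisors, cyclotomic d ℤ = X^(p*q) - 1 :=
    prod_cyclotomic_eq_X_pow_sub_one hpqpos ℤ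
  rw [hp.divisors] at ep
  rw [hq.divisors] at eq'
  rw [hdiv] at epq
  have hne1 : (1:ℕ) ≠ p := by omega
  have hne2 : (1:ℕ) ≠ q := by omega
  have hne3 : (1:ℕ) ≠ p*q := by nlinarith
  have hne4 : p ≠ q := by omega
  have hne5 : p ≠ p*q := by nlinarith
  have hne6 : q ≠ p*q := by nlinarith
  rw [show ({1, p} : Finset ℕ) = insert 1 {p} from rfl, Finset.prod_insert (by simp [hne1]),
    Finset.prod_singleton] at ep
  rw [show ({1, q} : Finset ℕ) = insert 1 {q} from rfl, Finset.prod_insert (by simp [hne2]),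
    Finset.prod_singleton] at eq'
  rw [Finset.prod_insert (by simp [hne1, hne2, hne3]), Finset.prod_insert (by simp [hne4, hne5]),
    Finset.prod_insert (by simp [hne6]), Finset.prod_singleton] at epq
  rw [← ep, ← eq', ← epq, cyclotomic_one]
  ring

/-- **Lam–Leung, part A**: for distinct primes `p < q`, with `pq = p_q*` and `qp = q_p*`
(the inverses of `p` mod `q` and of `q` mod `p`), a coefficient `d_m` of `Φ_{pq}`
with `0 ≤ m ≤ φ(pq)` equals `1` iff `m = u p + v q` for some `u ∈ [0, p_q* − 1]`
and `v ∈ [0, q_p* − 1]`. -/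
theorem lam_leung_A (p q pqs qps : ℕ) (hp : p.Prime) (hq : q.Prime) (hpq : p < q)
    (hpqs1 : 0 < pqs) (hpqs2 : pqs < q) (hpqs3 : p * pqs ≡ 1 [MOD q])
    (hqps1 : 0 < qps) (hqps2 : qps < p) (hqps3 : q * qps ≡ 1 [MOD p])
    (m : ℕ) (hm : m ≤ Nat.totient (p * q)) :
    (Polynomial.cyclotomic (p * q) ℤ).coeff m = 1 ↔
      ∃ u v : ℕ, u ≤ pqs - 1 ∧ v ≤ qps - 1 ∧ m = u * p + v * q := by
  have hkey : p * pqs + q * qps = p * q + 1 :=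
    lamleung_key p q pqs qps hp hq hpq hpqs1 hpqs2 hpqs3 hqps1 hqps2 hqps3
  -- the explicit polynomial
  set S1 : ℤ[X] := ∑ i ∈ Finset.range pqs, ∑ j ∈ Finset.range qps, (X:ℤ[X])^(i*p+j*q) with hS1
  set S2 : ℤ[X] := ∑ i ∈ Finset.range (q-pqs), ∑ j ∈ Finset.range (p-qps), (X:ℤ[X])^(i*p+j*q+1)
    with hS2
  have hS1' : S1 = (∑ i ∈ Finset.range pqs, (X:ℤ[X])^(i*p))
      * (∑ j ∈ Finset.range qps, (X:ℤ[X])^(j*q)) := by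
    rw [hS1, Finset.sum_mul_sum]
    exact Finset.sum_congr rfl fun i _ => Finset.sum_congr rfl fun j _ => pow_add X (i*p) (j*q)
  have hS2' : S2 = X * ((∑ i ∈ Finset.range (q-pqs), (X:ℤ[X])^(i*p))
      * (∑ j ∈ Finset.range (p-qps), (X:ℤ[X])^(j*q))) := by
    rw [hS2, Finset.sum_mul_sum, Finset.mul_sum]
    refine Finset.sum_congr rfl fun i _ => ?_
    rw [Finset.mul_sum]
    refine Finset.sum_congr rfl fun j _ => ?_
    rw [← mul_assoc]
    rw [pow_add, pow_succ, pow_add]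
    ring
  have hne : (((X:ℤ[X])^p - 1) * ((X:ℤ[X])^q - 1)) ≠ 0 := by
    have h2p : (1:ℤ) < 2^p := one_lt_pow₀ (by norm_num) hp.pos.ne'
    have h2q : (1:ℤ) < 2^q := one_lt_pow₀ (by norm_num) hq.pos.ne'
    intro h0
    have := congrArg (eval 2) h0
    simp only [eval_mul, eval_sub, eval_pow, eval_X, eval_one, eval_zero] at this
    rcases mul_eq_zero.1 this with h | h <;> linarith
  have hF : cyclotomic (p*q) ℤ = S1 - S2 := by
    apply mul_right_cancel₀ hne
    rw [lamleung_cyc_id p q hp hq hpq, hS1', hS2']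
    exact (lamleung_poly_id p q pqs qps hp.pos hq.pos hpqs2 hqps2 hkey hpqs1 hqps1).symm
  rw [hF, coeff_sub, hS1, hS2]
  simp only [finset_sum_coeff, coeff_X_pow]
  constructor
  · contrapose!
    intro h
    have hz : (∑ i ∈ Finset.range pqs, ∑ j ∈ Finset.range qps,
        (if m = i*p+j*q then (1:ℤ) else 0)) = 0 := by
      refine Finset.sum_eq_zero fun i hi => Finset.sum_eq_zero fun j hj => if_neg fun hmeq => ?_
      exact absurd hmeq (h i j (by have := Finset.mem_range.1 hi; omega)
        (by have := Finset.mem_range.1 hj; omega))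
    have hnn : (0:ℤ) ≤ ∑ i ∈ Finset.range (q-pqs), ∑ j ∈ Finset.range (p-qps),
        (if m = i*p+j*q+1 then (1:ℤ) else 0) := by
      refine Finset.sum_nonneg fun i _ => Finset.sum_nonneg fun j _ => ?_
      split <;> norm_num
    rw [hz]
    intro hcon
    linarith
  · rintro ⟨u, v, hu, hv, rfl⟩
    have hu' : u < pqs := by omega
    have hv' : v < qps := by omega
    have hz1 : (∑ i ∈ Finset.range pqs, ∑ j ∈ Finset.range qps,
        (if u*p+v*q = i*p+j*q then (1:ℤ) else 0)) = 1 := by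
      rw [← Finset.sum_product']
      rw [Finset.sum_eq_single_of_mem (u, v)
        (Finset.mem_product.2 ⟨Finset.mem_range.2 hu', Finset.mem_range.2 hv'⟩)]
      · exact if_pos rfl
      · rintro ⟨i, j⟩ hb hne'
        refine if_neg fun hmeq => hne' ?_
        have hi : i < q := lt_trans (Finset.mem_range.1 (Finset.mem_product.1 hb).1) hpqs2
        obtain ⟨h1, h2⟩ := lamleung_uniq p q hp hq hpq i j u v hi (lt_trans hu' hpqs2) hmeq.symm
        simp [h1, h2]
    have hz2 : (∑ i ∈ Finset.range (q-pqs), ∑ j ∈ Finset.range (p-qps),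
        (if u*p+v*q = i*p+j*q+1 then (1:ℤ) else 0)) = 0 := by
      refine Finset.sum_eq_zero fun i hi => Finset.sum_eq_zero fun j hj => if_neg fun hmeq => ?_
      have hi' : i < q - pqs := Finset.mem_range.1 hi
      have hj' : j < p - qps := Finset.mem_range.1 hj
      have heq2 : (i+pqs)*p + (j+qps)*q = u*p + (v+p)*q := by
        have e1 : (i+pqs)*p = i*p + pqs*p := add_mul _ _ _
        have e2 : (j+qps)*q = j*q + qps*q := add_mul _ _ _
        have e3 : (v+p)*q = v*q + p*q := add_mul _ _ _
        have e4 : pqs*p = p*pqs := mul_comm _ _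
        have e5 : qps*q = q*qps := mul_comm _ _
        omega
      obtain ⟨h1, h2⟩ := lamleung_uniq p q hp hq hpq (i+pqs) (j+qps) u (v+p)
        (by omega) (lt_trans hu' hpqs2) heq2
      omega
    rw [hz1, hz2]
    norm_num
end

section
/- Let p < q be distinct primes and write Φ_{pq}(x) = Σ_m d_m x^m. For 0 ≤ m ≤ φ(pq), one has d_m = −1 if and only if m + pq = u'p + v'q for some integers u' ∈ [p_q*, q − 1] and v' ∈ [q_p*, p − 1]. (Lam–Leung, part B.) -/
lemma llB_key (p q pqs qps : ℕ) (hp : 2 ≤ p) (hq : 2 ≤ q) (hcop : Nat.Coprime p q)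
    (hpqs1 : 0 < pqs) (hpqs2 : pqs < q) (hpqs3 : p * pqs ≡ 1 [MOD q])
    (hqps1 : 0 < qps) (hqps2 : qps < p) (hqps3 : q * qps ≡ 1 [MOD p]) :
    p * pqs + q * qps = p * q + 1 := by
  have h1 : 1 ≤ p * pqs := Nat.one_le_iff_ne_zero.2 (by positivity)
  have h2 : 1 ≤ q * qps := Nat.one_le_iff_ne_zero.2 (by positivity)
  have hdq : q ∣ (p * pqs + q * qps) - 1 := by
    obtain ⟨k, hk⟩ := (Nat.modEq_iff_dvd' h1).1 hpqs3.symm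
    exact ⟨k + qps, by rw [Nat.mul_add]; omega⟩
  have hdp : p ∣ (p * pqs + q * qps) - 1 := by
    obtain ⟨k, hk⟩ := (Nat.modEq_iff_dvd' h2).1 hqps3.symm
    exact ⟨k + pqs, by rw [Nat.mul_add]; omega⟩
  obtain ⟨k, hk⟩ := hcop.mul_dvd_of_dvd_of_dvd hdp hdq
  have hA : p * pqs ≤ p * (q - 1) := Nat.mul_le_mul_left _ (by omega)
  have hB : q * qps ≤ q * (p - 1) := Nat.mul_le_mul_left _ (by omega)
  have e1 : p * (q - 1) + p = p * q := by
    have h : (q - 1) + 1 = q := by omega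
    calc p * (q - 1) + p = p * ((q - 1) + 1) := by ring
    _ = p * q := by rw [h]
  have e2 : q * (p - 1) + q = p * q := by
    have h : (p - 1) + 1 = p := by omega
    calc q * (p - 1) + q = q * ((p - 1) + 1) := by ring
    _ = q * p := by rw [h]
    _ = p * q := by ring
  match k with
  | 0 => omega
  | 1 => omega
  | (k + 2) =>
    have : p * q * (k + 2) = p * q * k + p * q + p * q := by ring
    omega
open Polynomial Finset

lemma llB_divisors (p q : ℕ) (hp : p.Prime) (hq : q.Prime) (hne : p ≠ q) :
    (p * q).divisors = {1, p, q, p * q} := by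
  ext d
  simp only [Nat.mem_divisors, Finset.mem_insert, Finset.mem_singleton]
  constructor
  · rintro ⟨hd, -⟩
    by_cases hpd : p ∣ d
    · obtain ⟨e, rfl⟩ := hpd
      have he : e ∣ q := (mul_dvd_mul_iff_left hp.pos.ne').1 hd
      rcases (Nat.dvd_prime hq).1 he with rfl | rfl
      · simp
      · tauto
    · have hcop : Nat.Coprime d p := (hp.coprime_iff_not_dvd.2 hpd).symm
      have : d ∣ q := Nat.Coprime.dvd_of_dvd_mul_left hcop hd
      rcases (Nat.dvd_prime hq).1 this with rfl | rfl <;> tauto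
  · have h0 : p * q ≠ 0 := Nat.mul_ne_zero hp.pos.ne' hq.pos.ne'
    rintro (rfl | rfl | rfl | rfl)
    exacts [⟨one_dvd _, h0⟩, ⟨Dvd.intro q rfl, h0⟩, ⟨Dvd.intro_left p rfl, h0⟩, ⟨dvd_rfl, h0⟩]

lemma llB_G (p q : ℕ) (hp : p.Prime) (hq : q.Prime) (hne : p ≠ q) :
    Polynomial.cyclotomic (p * q) ℤ * ((X ^ q - 1) * (X ^ p - 1)) =
      (X ^ (p * q) - 1) * (X - 1) := by
  have hq1 : cyclotomic 1 ℤ * cyclotomic q ℤ = X ^ q - 1 := by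
    rw [← prod_cyclotomic_eq_X_pow_sub_one hq.pos, hq.divisors,
      Finset.prod_insert (by simp [Ne.symm hq.one_lt.ne']), Finset.prod_singleton]
  have hp1 : cyclotomic 1 ℤ * cyclotomic p ℤ = X ^ p - 1 := by
    rw [← prod_cyclotomic_eq_X_pow_sub_one hp.pos, hp.divisors,
      Finset.prod_insert (by simp [Ne.symm hp.one_lt.ne']), Finset.prod_singleton]
  have hpq1 : cyclotomic 1 ℤ * cyclotomic p ℤ * cyclotomic q ℤ * cyclotomic (p * q) ℤ
      = X ^ (p * q) - 1 := by
    rw [← prod_cyclotomic_eq_X_pow_sub_one (Nat.mul_pos hp.pos hq.pos),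
      llB_divisors p q hp hq hne]
    have hppq : p < p * q := (Nat.lt_mul_iff_one_lt_right hp.pos).2 hq.one_lt
    have hqpq : q < p * q := (Nat.lt_mul_iff_one_lt_left hq.pos).2 hp.one_lt
    have h1 : (1 : ℕ) ∉ ({p, q, p * q} : Finset ℕ) := by
      simp only [Finset.mem_insert, Finset.mem_singleton]
      push_neg
      exact ⟨Ne.symm hp.one_lt.ne', Ne.symm hq.one_lt.ne', by omega⟩
    have h2 : p ∉ ({q, p * q} : Finset ℕ) := by
      simp only [Finset.mem_insert, Finset.mem_singleton]
      push_neg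
      exact ⟨hne, by omega⟩
    have h3 : q ∉ ({p * q} : Finset ℕ) := by
      simp only [Finset.mem_singleton]
      omega
    rw [Finset.prod_insert h1, Finset.prod_insert h2, Finset.prod_insert h3,
      Finset.prod_singleton]
    ring
  calc cyclotomic (p * q) ℤ * ((X ^ q - 1) * (X ^ p - 1))
      = (cyclotomic 1 ℤ * cyclotomic p ℤ * cyclotomic q ℤ * cyclotomic (p * q) ℤ) *
        cyclotomic 1 ℤ := by rw [← hq1, ← hp1]; ring
    _ = (X ^ (p * q) - 1) * (X - 1) := by rw [hpq1, cyclotomic_one]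

lemma llB_geom (n a b : ℕ) :
    (∑ i ∈ Finset.range n, (X : ℤ[X]) ^ (b * (a + i))) * (X ^ b - 1)
      = X ^ (b * (a + n)) - X ^ (b * a) := by
  have h : ∀ i, (X : ℤ[X]) ^ (b * (a + i)) = X ^ (b * a) * (X ^ b) ^ i := by
    intro i; rw [Nat.mul_add, pow_add, pow_mul, pow_mul]
  calc (∑ i ∈ Finset.range n, (X : ℤ[X]) ^ (b * (a + i))) * (X ^ b - 1)
      = X ^ (b * a) * ((∑ i ∈ Finset.range n, ((X : ℤ[X]) ^ b) ^ i) * (X ^ b - 1)) := by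
        simp_rw [h]; rw [← Finset.mul_sum]; ring
    _ = X ^ (b * a) * ((X ^ b) ^ n - 1) := by rw [geom_sum_mul]
    _ = X ^ (b * (a + n)) - X ^ (b * a) := by
        rw [Nat.mul_add, pow_add, pow_mul, pow_mul]; ring

lemma llB_poly (p q pqs qps : ℕ) (hp : p.Prime) (hq : q.Prime) (hne : p ≠ q)
    (hpqs2 : pqs ≤ q) (hqps2 : qps ≤ p)
    (hkey : p * pqs + q * qps = p * q + 1) :
    Polynomial.cyclotomic (p * q) ℤ * X ^ (p * q) =
      (∑ i ∈ Finset.range qps, X ^ (q * i)) * (∑ j ∈ Finset.range pqs, X ^ (p * j))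
          * X ^ (p * q)
        - (∑ i ∈ Finset.range (p - qps), X ^ (q * (qps + i)))
          * (∑ j ∈ Finset.range (q - pqs), X ^ (p * (pqs + j))) := by
  have hXq : ((X : ℤ[X]) ^ q - 1) ≠ 0 := by
    have := X_pow_sub_C_ne_zero (R := ℤ) hq.pos 1
    rwa [map_one] at this
  have hXp : ((X : ℤ[X]) ^ p - 1) ≠ 0 := by
    have := X_pow_sub_C_ne_zero (R := ℤ) hp.pos 1
    rwa [map_one] at this
  apply mul_right_cancel₀ (b := ((X : ℤ[X]) ^ q - 1) * (X ^ p - 1)) (mul_ne_zero hXq hXp)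
  have hA : (∑ i ∈ Finset.range qps, (X : ℤ[X]) ^ (q * i)) * (X ^ q - 1)
      = X ^ (q * qps) - 1 := by
    have := llB_geom qps 0 q
    simpa using this
  have hB : (∑ j ∈ Finset.range pqs, (X : ℤ[X]) ^ (p * j)) * (X ^ p - 1)
      = X ^ (p * pqs) - 1 := by
    have := llB_geom pqs 0 p
    simpa using this
  have hC : (∑ i ∈ Finset.range (p - qps), (X : ℤ[X]) ^ (q * (qps + i))) * (X ^ q - 1)
      = X ^ (q * p) - X ^ (q * qps) := by
    have := llB_geom (p - qps) qps q
    rwa [show qps + (p - qps) = p by omega] at this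
  have hD : (∑ j ∈ Finset.range (q - pqs), (X : ℤ[X]) ^ (p * (pqs + j))) * (X ^ p - 1)
      = X ^ (p * q) - X ^ (p * pqs) := by
    have := llB_geom (q - pqs) pqs p
    rwa [show pqs + (q - pqs) = q by omega] at this
  have hX : (X : ℤ[X]) ^ (q * qps) * X ^ (p * pqs) = X ^ (p * q) * X := by
    rw [← pow_add, ← pow_succ, show q * qps + p * pqs = p * q + 1 by omega]
  calc cyclotomic (p * q) ℤ * X ^ (p * q) * ((X ^ q - 1) * (X ^ p - 1))
      = cyclotomic (p * q) ℤ * ((X ^ q - 1) * (X ^ p - 1)) * X ^ (p * q) := by ring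
    _ = (X ^ (p * q) - 1) * (X - 1) * X ^ (p * q) := by rw [llB_G p q hp hq hne]
    _ = ((X ^ (q * qps) - 1) * (X ^ (p * pqs) - 1)) * X ^ (p * q)
          - (X ^ (q * p) - X ^ (q * qps)) * (X ^ (p * q) - X ^ (p * pqs)) := by
        rw [show q * p = p * q by ring]
        linear_combination (1 - (X : ℤ[X]) ^ (p * q)) * hX
    _ = ((∑ i ∈ Finset.range qps, X ^ (q * i)) * (∑ j ∈ Finset.range pqs, X ^ (p * j))
            * X ^ (p * q)
          - (∑ i ∈ Finset.range (p - qps), X ^ (q * (qps + i)))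
            * (∑ j ∈ Finset.range (q - pqs), X ^ (p * (pqs + j))))
        * ((X ^ q - 1) * (X ^ p - 1)) := by
        rw [← hA, ← hB, ← hC, ← hD]; ring
open Polynomial Finset

lemma llB_coeff_prod (s t : Finset ℕ) (f g : ℕ → ℕ) (n : ℕ) :
    ((∑ i ∈ s, (X : ℤ[X]) ^ (f i)) * (∑ j ∈ t, X ^ (g j))).coeff n
      = (((s ×ˢ t).filter (fun x => f x.1 + g x.2 = n)).card : ℤ) := by
  rw [Finset.sum_mul_sum]
  simp_rw [← pow_add]
  rw [← Finset.sum_product']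
  rw [Polynomial.finset_sum_coeff]
  simp_rw [Polynomial.coeff_X_pow]
  rw [Finset.card_filter]
  push_cast
  refine Finset.sum_congr rfl fun x _ => ?_
  by_cases h : f x.1 + g x.2 = n
  · simp [h]
  · have h2 : ¬ n = f x.1 + g x.2 := fun e => h e.symm
    simp [h, h2]

lemma llB_unique_aux (p q : ℕ) (hp : p.Prime) (hq : q.Prime) (hne : p ≠ q)
    {i i' j j' : ℕ} (hi' : i' < p) (hle : i ≤ i')
    (h : q * i + p * j = q * i' + p * j') : i = i' := by
  have hq1 : q * i ≤ q * i' := Nat.mul_le_mul_left _ hle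
  have hj : j' ≤ j := Nat.le_of_mul_le_mul_left (by omega) hp.pos
  have e : q * (i' - i) = p * (j - j') := by
    rw [Nat.mul_sub, Nat.mul_sub]; omega
  have hdvd : p ∣ (i' - i) * q := by
    rw [mul_comm]; exact ⟨j - j', e⟩
  have hcop : Nat.Coprime p q := (Nat.coprime_primes hp hq).2 hne
  have := Nat.eq_zero_of_dvd_of_lt (hcop.dvd_of_dvd_mul_right hdvd) ?_
  · omega
  · omega

lemma llB_unique (p q : ℕ) (hp : p.Prime) (hq : q.Prime) (hne : p ≠ q)
    {i i' j j' : ℕ} (hi : i < p) (hi' : i' < p)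
    (h : q * i + p * j = q * i' + p * j') : i = i' ∧ j = j' := by
  have hii : i = i' := by
    rcases le_total i i' with hle | hle
    · exact llB_unique_aux p q hp hq hne hi' hle h
    · exact (llB_unique_aux p q hp hq hne hi hle h.symm).symm
  subst hii
  refine ⟨rfl, ?_⟩
  exact Nat.eq_of_mul_eq_mul_left hp.pos (show p * j = p * j' by omega)

/-- **Lam–Leung, part B**: for distinct primes `p < q`, with `pq = p_q*` and `qp = q_p*`
(the inverses of `p` mod `q` and of `q` mod `p`), a coefficient `d_m` of `Φ_{pq}`
with `0 ≤ m ≤ φ(pq)` equals `-1` iff `m + pq = u' p + v' q` for some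
`u' ∈ [p_q*, q − 1]` and `v' ∈ [q_p*, p − 1]`. -/
theorem lam_leung_B (p q pqs qps : ℕ) (hp : p.Prime) (hq : q.Prime) (hpq : p < q)
    (hpqs1 : 0 < pqs) (hpqs2 : pqs < q) (hpqs3 : p * pqs ≡ 1 [MOD q])
    (hqps1 : 0 < qps) (hqps2 : qps < p) (hqps3 : q * qps ≡ 1 [MOD p])
    (m : ℕ) (hm : m ≤ Nat.totient (p * q)) :
    (Polynomial.cyclotomic (p * q) ℤ).coeff m = -1 ↔
      ∃ u' v' : ℕ, pqs ≤ u' ∧ u' ≤ q - 1 ∧ qps ≤ v' ∧ v' ≤ p - 1 ∧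
        m + p * q = u' * p + v' * q := by
  have hne : p ≠ q := hpq.ne
  have hcop : Nat.Coprime p q := (Nat.coprime_primes hp hq).2 hne
  have hkey : p * pqs + q * qps = p * q + 1 :=
    llB_key p q pqs qps hp.two_le hq.two_le hcop hpqs1 hpqs2 hpqs3 hqps1 hqps2 hqps3
  set S1 := (Finset.range qps ×ˢ Finset.range pqs).filter
      (fun x => q * x.1 + p * x.2 = m) with hS1
  set S2 := (Finset.range (p - qps) ×ˢ Finset.range (q - pqs)).filter
      (fun x => q * (qps + x.1) + p * (pqs + x.2) = m + p * q) with hS2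
  -- coefficient formula
  have hpoly := llB_poly p q pqs qps hp hq hne hpqs2.le hqps2.le hkey
  have hcoeff : (Polynomial.cyclotomic (p * q) ℤ).coeff m = (S1.card : ℤ) - S2.card := by
    have h0 := congrArg (fun f => Polynomial.coeff f (m + p * q)) hpoly
    rw [Polynomial.coeff_mul_X_pow] at h0
    rw [Polynomial.coeff_sub, Polynomial.coeff_mul_X_pow] at h0
    rw [llB_coeff_prod, llB_coeff_prod] at h0
    exact h0
  -- uniqueness: each count is at most 1
  have hc1 : S1.card ≤ 1 := by
    rw [Finset.card_le_one]
    rintro ⟨i, j⟩ ha ⟨i', j'⟩ hb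
    rw [hS1, Finset.mem_filter, Finset.mem_product, Finset.mem_range, Finset.mem_range] at ha hb
    dsimp only at ha hb
    have := llB_unique p q hp hq hne (lt_trans ha.1.1 hqps2) (lt_trans hb.1.1 hqps2)
      (ha.2.trans hb.2.symm)
    simp [this.1, this.2]
  have hc2 : S2.card ≤ 1 := by
    rw [Finset.card_le_one]
    rintro ⟨i, j⟩ ha ⟨i', j'⟩ hb
    rw [hS2, Finset.mem_filter, Finset.mem_product, Finset.mem_range, Finset.mem_range] at ha hb
    dsimp only at ha hb
    have := llB_unique p q hp hq hne (show qps + i < p by omega) (show qps + i' < p by omega)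
      (ha.2.trans hb.2.symm)
    have h1 : i = i' := by omega
    have h2 : j = j' := by omega
    simp [h1, h2]
  -- the two sets cannot both be nonempty
  have hdisj : ¬(0 < S1.card ∧ 0 < S2.card) := by
    rintro ⟨h1, h2⟩
    obtain ⟨⟨i, j⟩, hmem1⟩ := Finset.card_pos.1 h1
    obtain ⟨⟨i', j'⟩, hmem2⟩ := Finset.card_pos.1 h2
    rw [hS1, Finset.mem_filter, Finset.mem_product, Finset.mem_range, Finset.mem_range] at hmem1
    dsimp only at hmem1
    rw [hS2, Finset.mem_filter, Finset.mem_product, Finset.mem_range, Finset.mem_range] at hmem2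
    dsimp only at hmem2
    set a := qps + i' - i with ha
    set b := pqs + j' - j with hb
    have ea : q * (qps + i') = q * i + q * a := by
      rw [show qps + i' = i + a by omega, Nat.mul_add]
    have eb : p * (pqs + j') = p * j + p * b := by
      rw [show pqs + j' = j + b by omega, Nat.mul_add]
    have heq : q * a + p * b = p * q := by omega
    have hb_le : b ≤ q := by
      by_contra hc
      have : p * (q + 1) ≤ p * b := Nat.mul_le_mul_left _ (by omega)
      rw [Nat.mul_add] at this
      omega
    have e2 : q * a = p * (q - b) := by rw [Nat.mul_sub, Nat.mul_sub]; omega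
    have hdvd : p ∣ a * q := by rw [mul_comm]; exact ⟨q - b, e2⟩
    have := Nat.eq_zero_of_dvd_of_lt (hcop.dvd_of_dvd_mul_right hdvd) (by omega)
    omega
  constructor
  · intro h
    rw [hcoeff] at h
    have h2 : S2.card = 1 := by omega
    obtain ⟨⟨i, j⟩, hmem⟩ := Finset.card_pos.1 (by omega : 0 < S2.card)
    rw [hS2, Finset.mem_filter, Finset.mem_product, Finset.mem_range, Finset.mem_range] at hmem
    dsimp only at hmem
    refine ⟨pqs + j, qps + i, by omega, by omega, by omega, by omega, ?_⟩
    have := hmem.2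
    rw [mul_comm (pqs + j) p, mul_comm (qps + i) q]
    omega
  · rintro ⟨u', v', h1, h2, h3, h4, h5⟩
    have hmem : (v' - qps, u' - pqs) ∈ S2 := by
      rw [hS2, Finset.mem_filter, Finset.mem_product, Finset.mem_range, Finset.mem_range]
      refine ⟨⟨by omega, by omega⟩, ?_⟩
      rw [show qps + (v' - qps) = v' by omega, show pqs + (u' - pqs) = u' by omega]
      rw [mul_comm u' p, mul_comm v' q] at h5
      omega
    have h2pos : 0 < S2.card := Finset.card_pos.2 ⟨_, hmem⟩
    have h1zero : S1.card = 0 := by omega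
    rw [hcoeff, h1zero, show S2.card = 1 by omega]
    norm_num
end

section
/- For distinct primes p < q, the identity (p − 1)(q − 1) = (p_q* − 1)·p + (q_p* − 1)·q holds. -/
/-!
`S = p p_q* + q q_p*` is `≡ 1` both mod `p` and mod `q`, hence mod `pq`; the bounds
`p + q ≤ S ≤ 2pq - p - q` then force `S = pq + 1`, which rearranges to the identity.
-/

namespace Nat

theorem mul_add_mul_modEq_one_mul {p q a b : ℕ} (ha : p * a ≡ 1 [MOD q])
    (hb : q * b ≡ 1 [MOD p]) : p * a + q * b ≡ 1 [MOD p * q] := by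
  have hmod_p : p * a + q * b ≡ 1 [MOD p] := by
    simpa using (modEq_zero_iff_dvd.2 (dvd_mul_right p a)).add hb
  have hmod_q : p * a + q * b ≡ 1 [MOD q] := by
    simpa using ha.add (modEq_zero_iff_dvd.2 (dvd_mul_right q b))
  exact (modEq_and_modEq_iff_modEq_mul (coprime_of_mul_modEq_one a ha)).1 ⟨hmod_p, hmod_q⟩

theorem mul_add_mul_eq_mul_add_one {p q a b : ℕ} (ha : p * a ≡ 1 [MOD q])
    (hb : q * b ≡ 1 [MOD p]) (ha₀ : 0 < a) (haq : a < q) (hb₀ : 0 < b) (hbp : b < p) :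
    p * a + q * b = p * q + 1 := by
  have hS : p * a + q * b ≡ p * q + 1 [MOD p * q] :=
    (mul_add_mul_modEq_one_mul ha hb).trans (by simp [ModEq])
  refine hS.eq_of_abs_lt (abs_sub_lt_iff.2 ⟨?_, ?_⟩)
  · push_cast
    nlinarith
  · push_cast
    nlinarith

end Nat

theorem totient_identity_general (p q pqs qps : ℕ)
    (hpqs1 : 0 < pqs) (hpqs2 : pqs < q) (hpqs3 : p * pqs ≡ 1 [MOD q])
    (hqps1 : 0 < qps) (hqps2 : qps < p) (hqps3 : q * qps ≡ 1 [MOD p]) :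
    (p - 1) * (q - 1) = (pqs - 1) * p + (qps - 1) * q := by
  have key : p * pqs + q * qps = p * q + 1 :=
    Nat.mul_add_mul_eq_mul_add_one hpqs3 hqps3 hpqs1 hpqs2 hqps1 hqps2
  zify [show 1 ≤ p by omega, show 1 ≤ q by omega, hpqs1, hqps1] at key ⊢
  linear_combination -key

/-- For distinct primes `p < q`, with `pq = p_q*` and `qp = q_p*` the inverses of
`p` mod `q` and of `q` mod `p`, one has `(p−1)(q−1) = (p_q* − 1) p + (q_p* − 1) q`. -/
theorem totient_identity (p q pqs qps : ℕ) (hp : p.Prime) (hq : q.Prime) (hpq : p < q)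
    (hpqs1 : 0 < pqs) (hpqs2 : pqs < q) (hpqs3 : p * pqs ≡ 1 [MOD q])
    (hqps1 : 0 < qps) (hqps2 : qps < p) (hqps3 : q * qps ≡ 1 [MOD p]) :
    (p - 1) * (q - 1) = (pqs - 1) * p + (qps - 1) * q :=
  totient_identity_general p q pqs qps hpqs1 hpqs2 hpqs3 hqps1 hqps2 hqps3
end

section
/- Let p < q < r be odd primes, write Φ_{pqr}(x) = Σ_i c_i x^i and Φ_{pq}(x) = Σ_m d_m x^m (with c_i = 0 for i outside [0, φ(pqr)] and d_m = 0 for m outside [0, φ(pq)]). Then for every integer i, c_i = Σ d_m χ_{mr}(i), where the sum is over all integers m with 0 ≤ m ≤ φ(pq) and mr + p + q ≥ i + 1 + pq. -/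
/-- The map `χ_n : ℤ → {0, ±1}` from the paper (depending on `p` and `q`).
Here `x % (p*q)` plays the role of `x̄`, the representative of `x` modulo `pq`
lying in `[0, pq − 1]`. -/
def chi (p q : ℕ) (n i : ℤ) : ℤ :=
  if ((i + 1) % (p * q) ≤ (n + p + q) % (p * q) ∧ (n + q) % (p * q) < (i + 1) % (p * q)) ∨
     ((i + 1) % (p * q) ≤ (n + p + q) % (p * q) ∧ (n + p + q) % (p * q) < (n + q) % (p * q)) ∨
     ((n + p + q) % (p * q) < (n + q) % (p * q) ∧ (n + q) % (p * q) < (i + 1) % (p * q))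
  then 1
  else if ((i + 1) % (p * q) ≤ (n + p) % (p * q) ∧ n % (p * q) < (i + 1) % (p * q)) ∨
     ((i + 1) % (p * q) ≤ (n + p) % (p * q) ∧ (n + p) % (p * q) < n % (p * q)) ∨
     ((n + p) % (p * q) < n % (p * q) ∧ n % (p * q) < (i + 1) % (p * q))
  then -1
  else 0

/-- Integer-indexed coefficient of a polynomial: `coeffZ P i = 0` for `i < 0`. -/
def coeffZ (P : Polynomial ℤ) (i : ℤ) : ℤ :=
  if 0 ≤ i then P.coeff i.toNat else 0

/-!
Since `r ∤ pq`, `Φ_pq(x^r) = Φ_pqr(x) Φ_pq(x)`, and `Φ_pq(x) (x^p - 1)(x^q - 1) = (x^pq - 1)(x - 1)`;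
hence `Φ_pqr(x) (x^pq - 1) = Φ_pq(x^r) ψ(x)` with `ψ = (x^p - 1)(x^q - 1)/(x - 1)`. Dividing by
`x^pq - 1` at `x = ∞`, i.e. multiplying by `∑_{k ≥ 1} x^(-k pq)`, gives
`Φ_pqr(x) = Φ_pq(x^r) ∑_j e_j x^j`, where `e_j` vanishes for `j > p + q - pq - 1` and equals
`χ_n(n + j)` below that bound. To make this rigorous without Laurent series, note that both
`c_i` and `∑_m d_m e_(i - mr)` satisfy `u_(i - pq) - u_i = [x^i] Φ_pq(x^r) ψ(x)` and vanish for
large `i`; their difference is then `pq`-periodic and eventually zero.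
-/

open Polynomial Finset

theorem Function.Periodic.eq_zero_of_forall_ge {α : Type*} [Zero α] {f : ℤ → α} {N B : ℤ}
    (hf : Function.Periodic f N) (hN : 0 < N) (hB : ∀ j, B ≤ j → f j = 0) (j : ℤ) :
    f j = 0 := by
  rw [← hf.nat_mul (B - j).toNat j]
  exact hB _ (by nlinarith [Int.self_le_toNat (B - j)])

namespace Int

theorem emod_eq_add_or_eq_or_eq_sub {x N : ℤ} (h₁ : -N ≤ x) (h₂ : x < 2 * N) :
    x % N = x + N ∨ x % N = x ∨ x % N = x - N := by
  rcases lt_or_ge x 0 with hx | hx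
  · left; rw [← add_emod_right, emod_eq_of_lt (by omega) (by omega)]
  rcases lt_or_ge x N with hx' | hx'
  · right; left; exact emod_eq_of_lt hx hx'
  · right; right; rw [← sub_emod_right, emod_eq_of_lt (by omega) (by omega)]

theorem emod_lt_iff {x N p : ℤ} (hp : 0 ≤ p) (h₁ : p - N ≤ x) (h₂ : x < N) :
    x % N < p ↔ 0 ≤ x ∧ x < p := by
  rcases lt_or_ge x 0 with hx | hx
  · rw [← add_emod_right, emod_eq_of_lt (by omega) (by omega)]
    omega
  · rw [emod_eq_of_lt hx h₂]
    omega

/-- Membership of `u` in the cyclic interval `(a, a + p]` of `ℤ/N`, written with residues. -/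
theorem mem_cyclic_Ioc_iff {N a u p : ℤ} (hp : 0 ≤ p) (hpN : p < N) :
    ((u % N ≤ (a + p) % N ∧ a % N < u % N) ∨ (u % N ≤ (a + p) % N ∧ (a + p) % N < a % N) ∨
      ((a + p) % N < a % N ∧ a % N < u % N)) ↔ (u - a - 1) % N < p := by
  have hN : 0 < N := by omega
  have hu := emod_nonneg u hN.ne'; have hu' := emod_lt_of_pos u hN
  have ha := emod_nonneg a hN.ne'; have ha' := emod_lt_of_pos a hN
  have hb := emod_nonneg (a + p) hN.ne'; have hb' := emod_lt_of_pos (a + p) hN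
  have ht := emod_nonneg (u - a - 1) hN.ne'; have ht' := emod_lt_of_pos (u - a - 1) hN
  have hB := emod_eq_add_or_eq_or_eq_sub (x := a % N + p) (N := N) (by omega) (by omega)
  have hT := emod_eq_add_or_eq_or_eq_sub (x := u % N - a % N - 1) (N := N) (by omega) (by omega)
  rw [emod_add_emod] at hB
  rw [((mod_modEq u N).sub (mod_modEq a N)).sub_right 1] at hT
  omega

end Int

theorem coeffZ_sub (P Q : ℤ[X]) (j : ℤ) : coeffZ (P - Q) j = coeffZ P j - coeffZ Q j := by
  unfold coeffZ; split_ifs <;> simp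

theorem coeffZ_sum {ι : Type*} (s : Finset ι) (P : ι → ℤ[X]) (j : ℤ) :
    coeffZ (∑ k ∈ s, P k) j = ∑ k ∈ s, coeffZ (P k) j := by
  unfold coeffZ; split_ifs <;> simp [finsetSum_coeff]

theorem coeffZ_C_mul (a : ℤ) (P : ℤ[X]) (j : ℤ) : coeffZ (C a * P) j = a * coeffZ P j := by
  unfold coeffZ; split_ifs <;> simp

theorem coeffZ_mul_X_pow (P : ℤ[X]) (n : ℕ) (j : ℤ) :
    coeffZ (P * X ^ n) j = coeffZ P (j - n) := by
  unfold coeffZ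
  rw [coeff_mul_X_pow']
  split_ifs <;> first | rfl | omega | (congr 1; omega)

theorem coeffZ_mul_X_pow_sub_one (P : ℤ[X]) (n : ℕ) (j : ℤ) :
    coeffZ (P * (X ^ n - 1)) j = coeffZ P (j - n) - coeffZ P j := by
  rw [mul_sub, mul_one, coeffZ_sub, coeffZ_mul_X_pow]

theorem coeffZ_eq_zero_of_natDegree_lt {P : ℤ[X]} {j : ℤ} (h : (P.natDegree : ℤ) < j) :
    coeffZ P j = 0 := by
  rw [coeffZ, if_pos (by omega)]
  exact coeff_eq_zero_of_natDegree_lt (by omega)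

theorem coeffZ_geom_sum (p : ℕ) (j : ℤ) :
    coeffZ (∑ k ∈ range p, X ^ k) j = if 0 ≤ j ∧ j < p then 1 else 0 := by
  unfold coeffZ
  simp only [finsetSum_coeff, coeff_X_pow, sum_ite_eq, mem_range]
  split_ifs <;> omega

theorem coeffZ_expand_mul (r : ℕ) (P Q : ℤ[X]) (j : ℤ) :
    coeffZ (expand ℤ r P * Q) j =
      ∑ m ∈ range (P.natDegree + 1), P.coeff m * coeffZ Q (j - m * r) := by
  conv_lhs => rw [P.as_sum_range_C_mul_X_pow]
  simp only [map_sum, map_mul, expand_C, map_pow, expand_X, sum_mul, coeffZ_sum]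
  refine sum_congr rfl fun m _ => ?_
  rw [mul_assoc, coeffZ_C_mul, ← pow_mul, mul_comm (X ^ _), coeffZ_mul_X_pow]
  rw [Nat.cast_mul, mul_comm (r : ℤ)]

theorem coeffZ_eq_sum_of_mul_X_pow_sub_one {R P Q : ℤ[X]} {N r : ℕ} (hN : 0 < N)
    (h : R * (X ^ N - 1) = expand ℤ r P * Q) {f : ℤ → ℤ} {B : ℤ}
    (hf : ∀ j, f (j - N) - f j = coeffZ Q j) (hB : ∀ j, B ≤ j → f j = 0) (j : ℤ) :
    coeffZ R j = ∑ m ∈ range (P.natDegree + 1), P.coeff m * f (j - m * r) := by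
  set S : ℤ → ℤ := fun j => ∑ m ∈ range (P.natDegree + 1), P.coeff m * f (j - m * r)
  have hrec : ∀ j, coeffZ R (j - N) - coeffZ R j = S (j - N) - S j := fun j => by
    rw [← coeffZ_mul_X_pow_sub_one, h, coeffZ_expand_mul, ← sum_sub_distrib]
    refine sum_congr rfl fun m _ => ?_
    rw [← hf, sub_right_comm, mul_sub]
  have hper : Function.Periodic (fun j => coeffZ R j - S j) N := fun j => by
    have := hrec (j + N)
    simp only [add_sub_cancel_right] at this
    dsimp only
    linarith
  have hvanish : ∀ j, max ((R.natDegree : ℤ) + 1) (B + P.natDegree * r) ≤ j →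
      coeffZ R j - S j = 0 := fun j hj => by
    obtain ⟨hR, hP⟩ := max_le_iff.1 hj
    rw [coeffZ_eq_zero_of_natDegree_lt (by omega), zero_sub, neg_eq_zero]
    refine sum_eq_zero fun m hm => ?_
    have : (m : ℤ) * r ≤ P.natDegree * r := by
      gcongr; exact_mod_cast Nat.lt_succ_iff.1 (mem_range.1 hm)
    rw [hB _ (by omega), mul_zero]
  exact sub_eq_zero.1 (hper.eq_zero_of_forall_ge (by exact_mod_cast hN) hvanish j)

theorem cyclotomic_mul_geom_sum_mul {R : Type*} [CommRing R] {p q : ℕ} (hp : p.Prime)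
    (hq : q.Prime) (hpq : p ≠ q) :
    cyclotomic (p * q) R * ((∑ k ∈ range p, X ^ k) * (X ^ q - 1)) = X ^ (p * q) - 1 := by
  have := Fact.mk hq
  have hexp := cyclotomic_expand_eq_cyclotomic_mul hp
    (fun h => hpq ((Nat.prime_dvd_prime_iff_eq hp hq).1 h)) R
  calc cyclotomic (p * q) R * ((∑ k ∈ range p, X ^ k) * (X ^ q - 1))
      = expand R p (cyclotomic q R * (X - 1)) := by
        rw [map_mul, hexp, map_sub, expand_X, map_one, mul_comm q p,
          ← cyclotomic_prime_mul_X_sub_one R q, ← geom_sum_mul X p]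
        ring
    _ = X ^ (p * q) - 1 := by
        rw [cyclotomic_prime_mul_X_sub_one, map_sub, map_pow, expand_X, map_one, pow_mul]

theorem cyclotomic_mul_X_pow_sub_one {R : Type*} [CommRing R] {p q r : ℕ} (hp : p.Prime)
    (hq : q.Prime) (hr : r.Prime) (hpq : p ≠ q) (hrp : r ≠ p) (hrq : r ≠ q) :
    cyclotomic (p * q * r) R * (X ^ (p * q) - 1) =
      expand R r (cyclotomic (p * q) R) * ((∑ k ∈ range p, X ^ k) * (X ^ q - 1)) := by
  have hdvd : ¬ r ∣ p * q := by
    rw [hr.dvd_mul, Nat.prime_dvd_prime_iff_eq hr hp, Nat.prime_dvd_prime_iff_eq hr hq]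
    tauto
  rw [cyclotomic_expand_eq_cyclotomic_mul hr hdvd, ← cyclotomic_mul_geom_sum_mul hp hq hpq]
  ring

/-- The coefficient of `x ^ j` in the expansion at `x = ∞` of
`(x ^ p - 1) (x ^ q - 1) / ((x - 1) (x ^ (p * q) - 1))`. -/
def laurentCoeff (p q : ℕ) (j : ℤ) : ℤ :=
  if j + p * q < p + q then
    (if (j - q) % (p * q) < p then 1 else 0) - (if j % (p * q) < p then 1 else 0)
  else 0

theorem laurentCoeff_eq_zero {p q : ℕ} {j : ℤ} (h : p + q ≤ j + p * q) :
    laurentCoeff p q j = 0 :=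
  if_neg (not_lt.2 h)

theorem laurentCoeff_sub_laurentCoeff {p q : ℕ} (hN : p + q ≤ p * q) (j : ℤ) :
    laurentCoeff p q (j - p * q) - laurentCoeff p q j =
      coeffZ ((∑ k ∈ range p, X ^ k) * (X ^ q - 1)) j := by
  have hN' : (p + q : ℤ) ≤ p * q := by exact_mod_cast hN
  rw [coeffZ_mul_X_pow_sub_one, coeffZ_geom_sum, coeffZ_geom_sum]
  unfold laurentCoeff
  rw [sub_add_cancel, sub_right_comm, Int.sub_emod_right, Int.sub_emod_right]
  by_cases h : j + p * q < p + q
  · rw [if_pos h, if_pos (show j < p + q by omega), sub_self,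
      if_neg (show ¬(0 ≤ j - q ∧ j - q < p) by omega), if_neg (show ¬(0 ≤ j ∧ j < p) by omega)]
    rfl
  rw [if_neg h, sub_zero]
  by_cases h' : j < p + q
  · rw [if_pos h']
    have hq' : (j - q) % (p * q) < p ↔ 0 ≤ j - q ∧ j - q < p :=
      Int.emod_lt_iff (Nat.cast_nonneg p) (by omega) (by omega)
    have hj : j % (p * q) < p ↔ 0 ≤ j ∧ j < p :=
      Int.emod_lt_iff (Nat.cast_nonneg p) (by omega) (by omega)
    simp only [hq', hj]
  · rw [if_neg h', if_neg (show ¬(0 ≤ j - q ∧ j - q < p) by omega),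
      if_neg (show ¬(0 ≤ j ∧ j < p) by omega)]
    rfl

theorem chi_eq_laurentCoeff {p q : ℕ} (hp : 0 < p) (hpq : p ≤ q) (hN : p + q ≤ p * q)
    {n i : ℤ} (h : i - n + p * q < p + q) : chi p q n i = laurentCoeff p q (i - n) := by
  have hN' : (p + q : ℤ) ≤ p * q := by exact_mod_cast hN
  have hpq' : (p : ℤ) ≤ q := by exact_mod_cast hpq
  have hpN : (p : ℤ) < p * q := by omega
  have hdisj : (i - n - q) % (p * q) < p → ¬ (i - n) % (p * q) < p := fun ht => by
    have h0 := Int.emod_nonneg (i - n - q) (show (p * q : ℤ) ≠ 0 by omega)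
    rw [show i - n = i - n - q + q by ring, ← Int.emod_add_emod,
      Int.emod_eq_of_lt (by omega) (by omega)]
    omega
  rw [chi, laurentCoeff, if_pos h, show n + p + q = n + q + p by ring]
  simp only [Int.mem_cyclic_Ioc_iff (Nat.cast_nonneg p) hpN,
    show i + 1 - (n + q) - 1 = i - n - q by ring, show i + 1 - n - 1 = i - n by ring]
  split_ifs <;> simp_all

theorem coeff_eq_sum_chi_general (p q r : ℕ) (hp : p.Prime) (hq : q.Prime) (hr : r.Prime)
    (hpq : p < q) (hqr : q < r) (i : ℤ) :
    coeffZ (Polynomial.cyclotomic (p * q * r) ℤ) i =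
      ∑ m ∈ (Finset.range (Nat.totient (p * q) + 1)).filter
          (fun m : ℕ => i + 1 + (p : ℤ) * q ≤ (m : ℤ) * r + p + q),
        (Polynomial.cyclotomic (p * q) ℤ).coeff m * chi p q ((m : ℤ) * r) i := by
  have hN : p + q ≤ p * q := by nlinarith [hp.two_le, hq.two_le]
  have hN' : (p + q : ℤ) ≤ p * q := by exact_mod_cast hN
  rw [coeffZ_eq_sum_of_mul_X_pow_sub_one (Nat.mul_pos hp.pos hq.pos)
      (cyclotomic_mul_X_pow_sub_one hp hq hr hpq.ne (hpq.trans hqr).ne' hqr.ne')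
      (f := laurentCoeff p q) (B := 0)
      (fun j => by exact_mod_cast laurentCoeff_sub_laurentCoeff hN j)
      (fun j hj => laurentCoeff_eq_zero (by linarith)) i,
    natDegree_cyclotomic, sum_filter]
  refine sum_congr rfl fun m _ => ?_
  split_ifs with h
  · rw [chi_eq_laurentCoeff hp.pos hpq.le hN (by linarith)]
  · rw [laurentCoeff_eq_zero (by linarith), mul_zero]

/-- For odd primes `p < q < r`, writing `Φ_{pqr} = Σ c_i x^i` and `Φ_{pq} = Σ d_m x^m`,
for every integer `i` one has `c_i = Σ d_m χ_{mr}(i)`, the sum being over all `m`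
with `0 ≤ m ≤ φ(pq)` and `m r + p + q ≥ i + 1 + pq`. -/
theorem coeff_eq_sum_chi (p q r : ℕ) (hp : p.Prime) (hq : q.Prime) (hr : r.Prime)
    (hop : Odd p) (hoq : Odd q) (hor : Odd r) (hpq : p < q) (hqr : q < r) (i : ℤ) :
    coeffZ (Polynomial.cyclotomic (p * q * r) ℤ) i =
      ∑ m ∈ (Finset.range (Nat.totient (p * q) + 1)).filter
          (fun m : ℕ => i + 1 + (p : ℤ) * q ≤ (m : ℤ) * r + p + q),
        (Polynomial.cyclotomic (p * q) ℤ).coeff m * chi p q ((m : ℤ) * r) i :=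
  coeff_eq_sum_chi_general p q r hp hq hr hpq hqr i
end

section
/- Let p < q < r be odd primes and write Φ_{pq}(x) = Σ_m d_m x^m (with d_m = 0 for m outside [0, φ(pq)]). Then for every integer i, Σ_{m} d_m χ_{mr}(i) = 0, where the sum is over all m with 0 ≤ m ≤ φ(pq). -/
/-!
Write `χ_n(i) = w(i + 1 - n - q) - w(i + 1 - n)`, where `w(t) = [1 ≤ t̄ ≤ p]` is the coefficient
of `x^t` in `x + x² + ⋯ + x^p` read modulo `x^{pq} - 1`. Then `Σ_m d_m χ_{mr}(i)` is the coefficient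
of `x^{i+1}` in `Φ_{pq}(x^r) (x^q - 1) (x + ⋯ + x^p)` modulo `x^{pq} - 1`. Since
`Φ_{pq}(x^r) = Φ_{pqr} Φ_{pq}` and `Φ_{pq} Φ_p (x^q - 1) = x^{pq} - 1`, that product equals
`x Φ_{pqr} (x^{pq} - 1)`, which vanishes modulo `x^{pq} - 1`.
-/

open Polynomial Finset AddMonoidAlgebra

theorem Int.emod_eq_add_or_eq_or_eq_sub_s7 {M y : ℤ} (h0 : -M ≤ y) (h1 : y < 2 * M) :
    y % M = y + M ∨ y % M = y ∨ y % M = y - M := by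
  rcases lt_or_ge y 0 with hy | hy
  · left
    simpa using Int.emod_eq_of_lt (a := y + M) (b := M) (by omega) (by omega)
  rcases lt_or_ge y M with hy' | hy'
  · exact Or.inr <| Or.inl <| Int.emod_eq_of_lt hy hy'
  · right; right
    simpa using Int.emod_eq_of_lt (a := y - M) (b := M) (by omega) (by omega)

/-- The three clauses say that `j` lies in the cyclic interval `(n, n + P]` of `ℤ / M`. -/
theorem emod_cyclic_interval_iff {M P : ℤ} (hP : 0 < P) (hPM : P < M) (n j : ℤ) :
    ((j % M ≤ (n + P) % M ∧ n % M < j % M) ∨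
      (j % M ≤ (n + P) % M ∧ (n + P) % M < n % M) ∨
      ((n + P) % M < n % M ∧ n % M < j % M)) ↔
      1 ≤ (j - n) % M ∧ (j - n) % M ≤ P := by
  have hbd (y : ℤ) : 0 ≤ y % M ∧ y % M < M :=
    ⟨Int.emod_nonneg y (by omega), Int.emod_lt_of_pos y (by omega)⟩
  rw [Int.add_emod, Int.emod_eq_of_lt hP.le hPM, Int.sub_emod]
  have := hbd n; have := hbd j; have := hbd (n % M + P); have := hbd (j % M - n % M)
  have := Int.emod_eq_add_or_eq_or_eq_sub_s7 (M := M) (y := n % M + P) (by omega) (by omega)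
  have := Int.emod_eq_add_or_eq_or_eq_sub_s7 (M := M) (y := j % M - n % M) (by omega) (by omega)
  omega

def cyclicWindow (M P x : ℤ) : ℤ := if 1 ≤ x % M ∧ x % M ≤ P then 1 else 0

theorem chi_eq_cyclicWindow_sub {p q : ℕ} (hp : 2 ≤ p) (hpq : p < q) (n i : ℤ) :
    chi p q n i = cyclicWindow (p * q) p (i + 1 - n - q) - cyclicWindow (p * q) p (i + 1 - n) := by
  have hp' : (2 : ℤ) ≤ p := by exact_mod_cast hp
  have hpq' : (p : ℤ) < q := by exact_mod_cast hpq
  have hpM : (p : ℤ) < p * q := by nlinarith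
  have hpqM : (p : ℤ) + q < p * q := by nlinarith
  -- shifting by `q` moves `[1, p]` off itself modulo `pq`, as `p < q` and `p + q < pq`
  have hdisj : ¬ (1 ≤ (i + 1 - n - q) % (p * q) ∧ (i + 1 - n - q) % (p * q) ≤ (p : ℤ) ∧
      1 ≤ (i + 1 - n) % (p * q) ∧ (i + 1 - n) % (p * q) ≤ (p : ℤ)) := by
    rintro ⟨h1, h2, -, h4⟩
    have hshift : (i + 1 - n) % (p * q) = ((i + 1 - n - q) % (p * q) + q) % (p * q) := by
      rw [Int.emod_add_emod, sub_add_cancel]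
    rw [Int.emod_eq_of_lt (a := (i + 1 - n - q) % (p * q) + q) (by omega) (by omega)] at hshift
    omega
  have hplus := emod_cyclic_interval_iff (by omega) hpM (n + q) (i + 1)
  have hminus := emod_cyclic_interval_iff (by omega) hpM n (i + 1)
  rw [chi, show n + (p : ℤ) + q = n + q + p by ring]
  simp only [hplus, hminus, cyclicWindow, sub_add_eq_sub_sub]
  split_ifs <;> omega

/-- Reduction modulo `X ^ M - 1`, realised in the group ring `ℤ[ℤ / M]`. -/
noncomputable def foldMod (M : ℕ) : ℤ[X] →ₐ[ℤ] AddMonoidAlgebra ℤ (ZMod M) :=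
  aeval (single 1 1)

theorem foldMod_X_pow (M k : ℕ) : foldMod M (X ^ k) = single (k : ZMod M) 1 := by
  simp [foldMod, single_pow]

theorem foldMod_eq_zero_of_dvd {M : ℕ} {P : ℤ[X]} (h : X ^ M - 1 ∣ P) : foldMod M P = 0 := by
  obtain ⟨Q, rfl⟩ := h
  rw [map_mul, map_sub, foldMod_X_pow, ZMod.natCast_self, map_one, ← one_def, sub_self, zero_mul]

theorem coeff_aeval_single_mul {R G : Type*} [CommRing R] [AddCommGroup G] (s : G) (P : R[X])
    {N : ℕ} (hN : P.natDegree < N) (y : AddMonoidAlgebra R G) (e : G) :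
    (aeval (single s 1) P * y).coeff e = ∑ m ∈ range N, P.coeff m * y.coeff (e - m • s) := by
  rw [aeval_eq_sum_range' hN, sum_mul, AddMonoidAlgebra.coeff_sum, Finsupp.finsetSum_apply]
  refine sum_congr rfl fun m _ => ?_
  rw [single_pow, one_pow, smul_mul_assoc, coeff_smul_apply, coeff_single_mul_apply, one_mul,
    smul_eq_mul, neg_add_eq_sub]

theorem coeff_foldMod_expand_mul (M r : ℕ) (P Q : ℤ[X]) {N : ℕ} (hN : P.natDegree < N)
    (e : ZMod M) :
    (foldMod M (expand ℤ r P * Q)).coeff e =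
      ∑ m ∈ range N, P.coeff m * (foldMod M Q).coeff (e - m * r) := by
  rw [map_mul, foldMod, expand_aeval, single_pow, one_pow, coeff_aeval_single_mul _ _ hN]
  simp [nsmul_eq_mul]

theorem cyclicWindow_eq_coeff_foldMod {M p : ℕ} (hpM : p < M) (x : ℤ) :
    cyclicWindow M p x = (foldMod M (∑ k ∈ Icc 1 p, X ^ k)).coeff (x : ZMod M) := by
  have hx0 : 0 ≤ x % M := Int.emod_nonneg x (by omega)
  have hmem (k : ℕ) (hk : k ∈ Icc 1 p) : (k : ZMod M) = x ↔ (x % M).toNat = k := by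
    rw [mem_Icc] at hk
    rw [← Int.cast_natCast k, ZMod.intCast_eq_intCast_iff', Int.emod_eq_of_lt (by omega) (by omega)]
    omega
  simp only [map_sum, foldMod_X_pow, AddMonoidAlgebra.coeff_sum, Finsupp.finsetSum_apply,
    AddMonoidAlgebra.coeff_single, Finsupp.single_apply]
  rw [sum_congr rfl fun k hk => if_congr (hmem k hk) rfl rfl, sum_ite_eq, cyclicWindow]
  split_ifs with h1 h2 h2 <;> simp only [mem_Icc] at h2 <;> omega

noncomputable def chiPoly (p q : ℕ) : ℤ[X] := (X ^ q - 1) * ∑ k ∈ Icc 1 p, X ^ k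

theorem chi_eq_coeff_foldMod_chiPoly {p q : ℕ} (hp : 2 ≤ p) (hpq : p < q) (n i : ℤ) :
    chi p q n i = (foldMod (p * q) (chiPoly p q)).coeff ((i + 1 - n : ℤ) : ZMod (p * q)) := by
  have hpM : p < p * q := lt_mul_of_one_lt_right (by omega) (by omega)
  have hcast : ((p : ℤ) * q) = ((p * q : ℕ) : ℤ) := by push_cast; ring
  rw [chi_eq_cyclicWindow_sub hp hpq, hcast, cyclicWindow_eq_coeff_foldMod hpM,
    cyclicWindow_eq_coeff_foldMod hpM, chiPoly, sub_mul, one_mul, map_sub, map_mul, foldMod_X_pow,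
    AddMonoidAlgebra.coeff_sub, Finsupp.sub_apply, AddMonoidAlgebra.coeff_single_mul_apply, one_mul]
  push_cast
  ring_nf

theorem sum_Icc_X_pow_eq_X_mul_cyclotomic (R : Type*) [CommRing R] {p : ℕ} (hp : p.Prime) :
    ∑ k ∈ Icc 1 p, (X : R[X]) ^ k = X * cyclotomic p R := by
  have := Fact.mk hp
  rw [cyclotomic_prime, mul_sum, range_eq_Ico, ← Ico_add_one_right_eq_Icc, ← zero_add 1,
    ← sum_Ico_add']
  exact sum_congr rfl fun k _ => pow_succ' X k

theorem cyclotomic_mul_mul_X_pow_sub_one (R : Type*) [CommRing R] {p q : ℕ} (hp : p.Prime)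
    (hq : q.Prime) (hpq : p ≠ q) :
    cyclotomic (p * q) R * cyclotomic p R * (X ^ q - 1) = X ^ (p * q) - 1 := by
  have := Fact.mk hp
  have := Fact.mk hq
  have hpq' : ¬ p ∣ q := fun h => hpq ((Nat.prime_dvd_prime_iff_eq hp hq).mp h)
  have hp1 : ¬ p ∣ 1 := hp.not_dvd_one
  have hexpand : expand R p (X ^ q - 1) = X ^ (p * q) - 1 := by
    rw [map_sub, map_one, map_pow, expand_X, ← pow_mul]
  rw [← hexpand, ← cyclotomic_prime_mul_X_sub_one R q, map_mul,
    cyclotomic_expand_eq_cyclotomic_mul hp hpq', ← cyclotomic_one R,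
    cyclotomic_expand_eq_cyclotomic_mul hp hp1, cyclotomic_one, one_mul, mul_comm q p]
  ring

theorem X_pow_sub_one_dvd_expand_cyclotomic_mul_chiPoly {p q r : ℕ} (hp : p.Prime)
    (hq : q.Prime) (hr : r.Prime) (hpq : p ≠ q) (hrpq : ¬ r ∣ p * q) :
    X ^ (p * q) - 1 ∣ expand ℤ r (cyclotomic (p * q) ℤ) * chiPoly p q := by
  refine ⟨cyclotomic (p * q * r) ℤ * X, ?_⟩
  rw [chiPoly, cyclotomic_expand_eq_cyclotomic_mul hr hrpq, sum_Icc_X_pow_eq_X_mul_cyclotomic ℤ hp,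
    ← cyclotomic_mul_mul_X_pow_sub_one ℤ hp hq hpq]
  ring

theorem sum_chi_eq_zero_general (p q r : ℕ) (hp : p.Prime) (hq : q.Prime) (hr : r.Prime)
    (hpq : p < q) (hqr : q < r) (i : ℤ) :
    ∑ m ∈ Finset.range (Nat.totient (p * q) + 1),
      (Polynomial.cyclotomic (p * q) ℤ).coeff m * chi p q ((m : ℤ) * r) i = 0 := by
  have hrpq : ¬ r ∣ p * q := by
    rw [hr.dvd_mul, Nat.prime_dvd_prime_iff_eq hr hp, Nat.prime_dvd_prime_iff_eq hr hq]
    omega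
  have hdeg : (cyclotomic (p * q) ℤ).natDegree < Nat.totient (p * q) + 1 :=
    (natDegree_cyclotomic _ ℤ).trans_lt (Nat.lt_succ_self _)
  calc _ = ∑ m ∈ range (Nat.totient (p * q) + 1), (cyclotomic (p * q) ℤ).coeff m *
        (foldMod (p * q) (chiPoly p q)).coeff (((i + 1 : ℤ) : ZMod (p * q)) - m * r) :=
        sum_congr rfl fun m _ => by
          rw [chi_eq_coeff_foldMod_chiPoly hp.two_le hpq]
          push_cast
          ring_nf
    _ = (foldMod (p * q) (expand ℤ r (cyclotomic (p * q) ℤ) * chiPoly p q)).coeff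
          ((i + 1 : ℤ) : ZMod (p * q)) :=
        (coeff_foldMod_expand_mul _ _ _ _ hdeg _).symm
    _ = 0 := by
        simp [foldMod_eq_zero_of_dvd
          (X_pow_sub_one_dvd_expand_cyclotomic_mul_chiPoly hp hq hr hpq.ne hrpq)]

/-- For odd primes `p < q < r`, writing `Φ_{pq} = Σ d_m x^m`, for every integer `i`
one has `Σ_{0 ≤ m ≤ φ(pq)} d_m χ_{mr}(i) = 0`. -/
theorem sum_chi_eq_zero (p q r : ℕ) (hp : p.Prime) (hq : q.Prime) (hr : r.Prime)
    (hop : Odd p) (hoq : Odd q) (hor : Odd r) (hpq : p < q) (hqr : q < r) (i : ℤ) :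
    ∑ m ∈ Finset.range (Nat.totient (p * q) + 1),
      (Polynomial.cyclotomic (p * q) ℤ).coeff m * chi p q ((m : ℤ) * r) i = 0 :=
  sum_chi_eq_zero_general p q r hp hq hr hpq hqr i
end

section
/- Let p < q < r be odd primes and let r_p* be the unique integer with 0 < r_p* < p and r·r_p* ≡ 1 (mod p). Then for all integers m and i: χ_{mr}(i) = −1 if and only if χ_{(m − r_p*·q)·r}(i) = 1. -/
lemma chi_excl (N p q a b A B x : ℤ) (hp : 0 < p) (hpq : p < q) (hqN : q < N) (hpqN : p + q ≤ N)
    (ha : 0 ≤ a) (ha' : a < N) (hx : 0 ≤ x) (hx' : x < N)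
    (hb0 : 0 ≤ b) (hb1 : b < N) (hA0 : 0 ≤ A) (hA1 : A < N) (hB0 : 0 ≤ B) (hB1 : B < N)
    (hb : b = a + p ∨ b = a + p - N)
    (hA : A = a + q ∨ A = a + q - N)
    (hB : B = A + p ∨ B = A + p - N)
    (hplus : (x ≤ B ∧ A < x) ∨ (x ≤ B ∧ B < A) ∨ (B < A ∧ A < x))
    (hminus : (x ≤ b ∧ a < x) ∨ (x ≤ b ∧ b < a) ∨ (b < a ∧ a < x)) : False := by
  omega

lemma chi_wrap (N a c : ℤ) (ha : 0 ≤ a) (ha' : a < N) (hc : 0 ≤ c) (hc' : c < N) :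
    (a + c) % N = a + c ∨ (a + c) % N = a + c - N := by
  rcases lt_or_ge (a + c) N with h | h
  · left
    have h0 : 0 ≤ a + c := by omega
    exact Int.emod_eq_of_lt h0 h
  · right
    have h0 : 0 ≤ a + c - N := by omega
    have h1 : a + c - N < N := by omega
    have h2 : (a + c) % N = (a + c - N) % N := by
      conv_lhs => rw [show a + c = (a + c - N) + N * 1 by ring]
      rw [Int.add_mul_emod_self_left]
    rw [h2]
    exact Int.emod_eq_of_lt h0 h1

lemma chi_ite_aux (P Q R : Prop) [Decidable P] [Decidable Q] [Decidable R] (h : ¬(P ∧ Q)) :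
    ((if P then (1 : ℤ) else if Q then -1 else 0) = -1) ↔
      ((if Q then (1 : ℤ) else if R then -1 else 0) = 1) := by
  split_ifs <;> first | tauto | omega

/-- For odd primes `p < q < r` with `rp = r_p*` the inverse of `r` mod `p`,
`χ_{mr}(i) = −1` iff `χ_{(m − r_p* q) r}(i) = 1`, for all integers `m, i`. -/
theorem chi_neg_iff (p q r rp : ℕ) (hp : p.Prime) (hq : q.Prime) (hr : r.Prime)
    (hop : Odd p) (hoq : Odd q) (hor : Odd r) (hpq : p < q) (hqr : q < r)
    (hrp1 : 0 < rp) (hrp2 : rp < p) (hrp3 : r * rp ≡ 1 [MOD p]) (m i : ℤ) :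
    chi p q (m * r) i = -1 ↔ chi p q ((m - (rp : ℤ) * q) * r) i = 1 := by
  set N : ℤ := (p : ℤ) * q with hN
  have hp3n : 3 ≤ p := by
    rcases hop with ⟨u, hu⟩; have := hp.two_le; omega
  have hp3 : 3 ≤ (p : ℤ) := by exact_mod_cast hp3n
  have hq3 : (p : ℤ) < q := by exact_mod_cast hpq
  have hNpos : 0 < N := by rw [hN]; nlinarith
  have hqN : (q : ℤ) < N := by rw [hN]; nlinarith
  have hpqN : (p : ℤ) + q ≤ N := by rw [hN]; nlinarith
  -- key divisibility : p ∣ r * rp - 1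
  have hdvd : ∃ k : ℤ, (r : ℤ) * rp - 1 = (p : ℤ) * k := by
    have h1 : (1 : ℕ) ≤ r * rp := Nat.one_le_iff_ne_zero.mpr
      (Nat.mul_ne_zero hr.pos.ne' hrp1.ne')
    obtain ⟨k, hk⟩ := (Nat.modEq_iff_dvd' h1).mp hrp3.symm
    refine ⟨(k : ℤ), ?_⟩
    have h3 : r * rp = p * k + 1 := by omega
    have h4 := congrArg (Nat.cast : ℕ → ℤ) h3
    push_cast at h4
    linarith
  obtain ⟨k, hk⟩ := hdvd
  have h1 : ((m - (rp : ℤ) * q) * r + q) % N = (m * r) % N := by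
    have hd : N ∣ m * r - ((m - (rp : ℤ) * q) * r + q) :=
      ⟨k, by rw [hN]; linear_combination (q : ℤ) * hk⟩
    exact Int.modEq_iff_dvd.mpr hd
  have h2 : ((m - (rp : ℤ) * q) * r + p + q) % N = (m * r + p) % N := by
    have hd : N ∣ (m * r + p) - ((m - (rp : ℤ) * q) * r + p + q) :=
      ⟨k, by rw [hN]; linear_combination (q : ℤ) * hk⟩
    exact Int.modEq_iff_dvd.mpr hd
  have hane : N ≠ 0 := hNpos.ne'
  have ha0 : 0 ≤ (m * r) % N := Int.emod_nonneg _ hane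
  have ha1 : (m * r) % N < N := Int.emod_lt_of_pos _ hNpos
  have hx0 : 0 ≤ (i + 1) % N := Int.emod_nonneg _ hane
  have hx1 : (i + 1) % N < N := Int.emod_lt_of_pos _ hNpos
  have hb0 : 0 ≤ (m * r + p) % N := Int.emod_nonneg _ hane
  have hb1 : (m * r + p) % N < N := Int.emod_lt_of_pos _ hNpos
  have hA0 : 0 ≤ (m * r + q) % N := Int.emod_nonneg _ hane
  have hA1 : (m * r + q) % N < N := Int.emod_lt_of_pos _ hNpos
  have hB0 : 0 ≤ (m * r + p + q) % N := Int.emod_nonneg _ hane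
  have hB1 : (m * r + p + q) % N < N := Int.emod_lt_of_pos _ hNpos
  have hpmod : (p : ℤ) % N = p := Int.emod_eq_of_lt (by positivity) (by omega)
  have hqmod : (q : ℤ) % N = q := Int.emod_eq_of_lt (by positivity) (by omega)
  have hbw : (m * r + p) % N = (m * r) % N + p ∨ (m * r + p) % N = (m * r) % N + p - N := by
    rw [Int.add_emod, hpmod]
    exact chi_wrap N _ _ ha0 ha1 (by positivity) (by omega)
  have hAw : (m * r + q) % N = (m * r) % N + q ∨ (m * r + q) % N = (m * r) % N + q - N := by
    rw [Int.add_emod, hqmod]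
    exact chi_wrap N _ _ ha0 ha1 (by positivity) (by omega)
  have hBw : (m * r + p + q) % N = (m * r + q) % N + p ∨
      (m * r + p + q) % N = (m * r + q) % N + p - N := by
    rw [show m * r + (p : ℤ) + q = (m * r + q) + p by ring]
    rw [Int.add_emod, hpmod]
    exact chi_wrap N _ _ hA0 hA1 (by positivity) (by omega)
  simp only [chi, ← hN, h1, h2]
  apply chi_ite_aux
  rintro ⟨hPl, hMn⟩
  exact chi_excl N p q ((m * r) % N) ((m * r + p) % N) ((m * r + q) % N)
    ((m * r + p + q) % N) ((i + 1) % N) (by omega) hq3 hqN hpqN ha0 ha1 hx0 hx1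
    hb0 hb1 hA0 hA1 hB0 hB1 hbw hAw hBw hPl hMn
end

section
/- Let p < q be distinct primes. The nonzero coefficients of Φ_{pq}(x) alternate between +1 and −1: all coefficients lie in {−1, 0, 1}, and if d_{m_1} and d_{m_2} are nonzero coefficients with m_1 < m_2 and d_m = 0 for all m_1 < m < m_2, then d_{m_2} = −d_{m_1}. -/
open Polynomial Finset

section Aux
variable (p q : ℕ)

/-- The auxiliary polynomial `B = (∑_{i<q} X^{pi}) (∑_{j<p} X^{qj})`. -/
noncomputable def cycAuxB : ℤ[X] :=
  (∑ i ∈ Finset.range q, (X : ℤ[X]) ^ (p * i)) * (∑ j ∈ Finset.range p, (X : ℤ[X]) ^ (q * j))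

end Aux

/-- Master identity: `Φ_{pq}(X) (X^{pq}-1) = (X-1) B`. -/
theorem cycAux_key (p q : ℕ) (hp : p.Prime) (hq : q.Prime) (hne : p ≠ q) :
    Polynomial.cyclotomic (p * q) ℤ * ((X : ℤ[X]) ^ (p * q) - 1) =
      ((X : ℤ[X]) - 1) * cycAuxB p q := by
  haveI : Fact q.Prime := ⟨hq⟩
  have hdvd : ¬ p ∣ q := fun h => hne ((Nat.prime_dvd_prime_iff_eq hp hq).mp h)
  have h1 : expand ℤ p (cyclotomic q ℤ) = cyclotomic (q * p) ℤ * cyclotomic q ℤ :=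
    cyclotomic_expand_eq_cyclotomic_mul hp hdvd ℤ
  have hq' : cyclotomic q ℤ = ∑ i ∈ Finset.range q, (X : ℤ[X]) ^ i := cyclotomic_prime ℤ q
  have h2 : cyclotomic (p * q) ℤ * (∑ i ∈ Finset.range q, (X : ℤ[X]) ^ i)
      = ∑ i ∈ Finset.range q, (X : ℤ[X]) ^ (p * i) := by
    rw [mul_comm p q, ← hq', ← h1, hq']
    simp [map_sum, Polynomial.expand_pow, pow_mul, mul_comm]
  have hT : (∑ j ∈ Finset.range p, (X : ℤ[X]) ^ (q * j)) * ((X : ℤ[X]) ^ q - 1)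
      = (X : ℤ[X]) ^ (p * q) - 1 := by
    have := geom_sum_mul ((X : ℤ[X]) ^ q) p
    simpa [← pow_mul, mul_comm q p] using this
  have hgeom : (∑ i ∈ Finset.range q, (X : ℤ[X]) ^ i) * ((X : ℤ[X]) - 1)
      = (X : ℤ[X]) ^ q - 1 := geom_sum_mul _ q
  calc cyclotomic (p * q) ℤ * ((X : ℤ[X]) ^ (p * q) - 1)
      = cyclotomic (p * q) ℤ *
        ((∑ j ∈ Finset.range p, (X : ℤ[X]) ^ (q * j)) * ((X : ℤ[X]) ^ q - 1)) := by rw [hT]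
    _ = (cyclotomic (p * q) ℤ * (∑ i ∈ Finset.range q, (X : ℤ[X]) ^ i)) * ((X : ℤ[X]) - 1)
          * (∑ j ∈ Finset.range p, (X : ℤ[X]) ^ (q * j)) := by rw [← hgeom]; ring
    _ = ((X : ℤ[X]) - 1) * cycAuxB p q := by rw [h2, cycAuxB]; ring

/-- The coefficients of `B` are `0` or `1`. -/
theorem cycAuxB_coeff_mem (p q : ℕ) (hp : p.Prime) (hq : q.Prime) (hne : p ≠ q) (m : ℕ) :
    (cycAuxB p q).coeff m = 0 ∨ (cycAuxB p q).coeff m = 1 := by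
  haveI : Fact p.Prime := ⟨hp⟩
  have hcoeff : (cycAuxB p q).coeff m =
      ∑ ij ∈ Finset.range q ×ˢ Finset.range p,
        if p * ij.1 + q * ij.2 = m then (1 : ℤ) else 0 := by
    rw [cycAuxB, Finset.sum_mul_sum]
    simp_rw [← pow_add, ← Finset.sum_product']
    rw [Polynomial.finset_sum_coeff]
    simp_rw [Polynomial.coeff_X_pow, eq_comm]
  rw [hcoeff, Finset.sum_boole]
  have hcard : ((Finset.range q ×ˢ Finset.range p).filter
      (fun ij => p * ij.1 + q * ij.2 = m)).card ≤ 1 := by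
    rw [Finset.card_le_one]
    intro a ha b hb
    simp only [Finset.mem_filter, Finset.mem_product, Finset.mem_range] at ha hb
    obtain ⟨⟨hai, haj⟩, hae⟩ := ha
    obtain ⟨⟨hbi, hbj⟩, hbe⟩ := hb
    have heq : p * a.1 + q * a.2 = p * b.1 + q * b.2 := by omega
    have hz : ((q : ZMod p) * (a.2 : ZMod p)) = (q : ZMod p) * (b.2 : ZMod p) := by
      have := congrArg (Nat.cast : ℕ → ZMod p) heq
      push_cast at this
      simpa [ZMod.natCast_self] using this
    have hqne : (q : ZMod p) ≠ 0 := by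
      rw [Ne, ZMod.natCast_eq_zero_iff]
      exact fun h => hne ((Nat.prime_dvd_prime_iff_eq hp hq).mp h)
    have hj : (a.2 : ZMod p) = (b.2 : ZMod p) := mul_left_cancel₀ hqne hz
    have hj' : a.2 = b.2 := by
      have := congrArg ZMod.val hj
      rwa [ZMod.val_cast_of_lt haj, ZMod.val_cast_of_lt hbj] at this
    have hi : a.1 = b.1 := by
      rw [hj'] at heq
      have hpp : p * a.1 = p * b.1 := by omega
      exact Nat.eq_of_mul_eq_mul_left hp.pos hpp
    exact Prod.ext hi hj'
  interval_cases h : ((Finset.range q ×ˢ Finset.range p).filter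
      (fun ij => p * ij.1 + q * ij.2 = m)).card
  · left; simp
  · right; simp

/-- The coefficient recursion: for `m < pq`, `d_m = b_m - b_{m-1}`. -/
theorem cyc_coeff_rel (p q : ℕ) (hp : p.Prime) (hq : q.Prime) (hne : p ≠ q) (m : ℕ)
    (hm : m < p * q) :
    (Polynomial.cyclotomic (p * q) ℤ).coeff m =
      (cycAuxB p q).coeff m - (if m = 0 then 0 else (cycAuxB p q).coeff (m - 1)) := by
  have h := congrArg (fun f : ℤ[X] => f.coeff m) (cycAux_key p q hp hq hne)
  rw [mul_sub, mul_one, Polynomial.coeff_sub, Polynomial.coeff_mul_X_pow',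
    if_neg (by omega), sub_mul, one_mul, Polynomial.coeff_sub] at h
  have hXB : ((X : ℤ[X]) * cycAuxB p q).coeff m =
      (if m = 0 then 0 else (cycAuxB p q).coeff (m - 1)) := by
    cases m with
    | zero => simp
    | succ n => simp [Polynomial.coeff_X_mul]
  rw [hXB] at h
  linarith

/-- Coefficients vanish from degree `pq` on. -/
theorem cyc_coeff_high (p q : ℕ) (hp : p.Prime) (hq : q.Prime) (hne : p ≠ q) (m : ℕ)
    (hm : p * q ≤ m) : (Polynomial.cyclotomic (p * q) ℤ).coeff m = 0 := by
  apply Polynomial.coeff_eq_zero_of_natDegree_lt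
  rw [Polynomial.natDegree_cyclotomic,
    Nat.totient_mul ((Nat.coprime_primes hp hq).mpr hne),
    Nat.totient_prime hp, Nat.totient_prime hq]
  have hp0 := hp.pos
  have hq0 := hq.pos
  have h1 : p - 1 < p := by omega
  have h2 : q - 1 < q := by omega
  exact lt_of_lt_of_le (Nat.mul_lt_mul'' h1 h2) hm

/-- For distinct primes `p < q`, the nonzero coefficients of `Φ_{pq}` alternate
between `+1` and `−1`: every coefficient lies in `{-1, 0, 1}`, and any two
consecutive nonzero coefficients are negatives of each other. -/
theorem cyclotomic_pq_alternating (p q : ℕ) (hp : p.Prime) (hq : q.Prime) (hpq : p < q) :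
    (∀ m : ℕ, (Polynomial.cyclotomic (p * q) ℤ).coeff m ∈ ({-1, 0, 1} : Set ℤ)) ∧
    ∀ m₁ m₂ : ℕ, m₁ < m₂ →
      (Polynomial.cyclotomic (p * q) ℤ).coeff m₁ ≠ 0 →
      (Polynomial.cyclotomic (p * q) ℤ).coeff m₂ ≠ 0 →
      (∀ m : ℕ, m₁ < m → m < m₂ → (Polynomial.cyclotomic (p * q) ℤ).coeff m = 0) →
      (Polynomial.cyclotomic (p * q) ℤ).coeff m₂ =
        -(Polynomial.cyclotomic (p * q) ℤ).coeff m₁ := by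
  have hne : p ≠ q := Nat.ne_of_lt hpq
  have hb : ∀ m, (cycAuxB p q).coeff m = 0 ∨ (cycAuxB p q).coeff m = 1 :=
    cycAuxB_coeff_mem p q hp hq hne
  have hrel : ∀ m, m < p * q → (Polynomial.cyclotomic (p * q) ℤ).coeff m =
      (cycAuxB p q).coeff m - (if m = 0 then 0 else (cycAuxB p q).coeff (m - 1)) :=
    cyc_coeff_rel p q hp hq hne
  have hhigh : ∀ m, p * q ≤ m → (Polynomial.cyclotomic (p * q) ℤ).coeff m = 0 :=
    cyc_coeff_high p q hp hq hne
  constructor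
  · intro m
    simp only [Set.mem_insert_iff, Set.mem_singleton_iff]
    rcases Nat.lt_or_ge m (p * q) with hm | hm
    · have h := hrel m hm
      by_cases hm0 : m = 0
      · rw [if_pos hm0] at h
        rcases hb m with h1 | h1 <;> omega
      · rw [if_neg hm0] at h
        rcases hb m with h1 | h1 <;> rcases hb (m - 1) with h2 | h2 <;> omega
    · right; left; exact hhigh m hm
  · intro m₁ m₂ h12 hn1 hn2 hzero
    have hm₂lt : m₂ < p * q := by
      by_contra h
      exact hn2 (hhigh m₂ (by omega))
    have hm₁lt : m₁ < p * q := by omega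
    have hconst : ∀ k, m₁ ≤ k → k < m₂ → (cycAuxB p q).coeff k = (cycAuxB p q).coeff m₁ := by
      intro k
      induction k with
      | zero =>
        intro h1 _
        have h0 : m₁ = 0 := by omega
        rw [h0]
      | succ n ih =>
        intro h1 h2
        rcases Nat.lt_or_ge m₁ (n + 1) with hlt | hge
        · have hdz : (Polynomial.cyclotomic (p * q) ℤ).coeff (n + 1) = 0 :=
            hzero (n + 1) hlt h2
          have hr := hrel (n + 1) (by omega)
          rw [if_neg (by omega)] at hr
          simp only [Nat.add_sub_cancel] at hr
          have hbe : (cycAuxB p q).coeff (n + 1) = (cycAuxB p q).coeff n := by omega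
          rw [hbe]
          exact ih (by omega) (by omega)
        · have h0 : m₁ = n + 1 := by omega
          rw [h0]
    have e2 := hrel m₂ hm₂lt
    rw [if_neg (by omega)] at e2
    rw [hconst (m₂ - 1) (by omega) (by omega)] at e2
    have e1 := hrel m₁ hm₁lt
    rcases hb m₁ with hB1 | hB1 <;> rcases hb m₂ with hB2 | hB2 <;>
    · by_cases hm0 : m₁ = 0
      · rw [if_pos hm0] at e1; omega
      · rw [if_neg hm0] at e1
        rcases hb (m₁ - 1) with hB0 | hB0 <;> omega
end

section
/- For distinct primes p and q, A(pq) = 1; that is, every coefficient of Φ_{pq}(x) lies in {−1, 0, 1}, and at least one coefficient has absolute value 1. -/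
open Polynomial Finset

/-- Bezout-type existence: `r*p + s*q = p*q + 1` with `1 ≤ r < q`, `1 ≤ s < p`. -/
lemma exists_rs (p q : ℕ) (hp : p.Prime) (hq : q.Prime) (hpq : p ≠ q) :
    ∃ r s : ℕ, 1 ≤ r ∧ r < q ∧ 1 ≤ s ∧ s < p ∧ r * p + s * q = p * q + 1 := by
  haveI : Fact q.Prime := ⟨hq⟩
  have hp0 : (p : ZMod q) ≠ 0 := by
    rw [Ne, ZMod.natCast_eq_zero_iff]
    exact fun h => hpq ((Nat.prime_dvd_prime_iff_eq hq hp).mp h).symm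
  set r := ((p : ZMod q)⁻¹).val with hrdef
  have hrq : r < q := ZMod.val_lt _
  have hr1 : ((r * p : ℕ) : ZMod q) = 1 := by
    push_cast
    rw [ZMod.natCast_val, ZMod.cast_id]
    exact inv_mul_cancel₀ hp0
  have hrpos : 1 ≤ r := by
    rcases Nat.eq_zero_or_pos r with h | h
    · exfalso; rw [h] at hr1; simp at hr1
    · exact h
  have hmod : r * p ≡ 1 [MOD q] := (ZMod.natCast_eq_natCast_iff _ _ _).mp (by exact_mod_cast hr1)
  have hdvd : (q : ℤ) ∣ ((1 : ℤ) - r * p) := by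
    have := (Nat.modEq_iff_dvd (n := q) (a := r * p) (b := 1)).mp hmod
    exact_mod_cast this
  obtain ⟨t, ht⟩ : (q : ℤ) ∣ ((p : ℤ) * q + 1 - r * p) := by
    obtain ⟨u, hu⟩ := hdvd
    exact ⟨p + u, by linarith⟩
  have hq0 : (0 : ℤ) < q := by exact_mod_cast hq.pos
  have hp2 : (2 : ℤ) ≤ p := by exact_mod_cast hp.two_le
  have hrz : (1 : ℤ) ≤ r := by exact_mod_cast hrpos
  have hrqz : (r : ℤ) < q := by exact_mod_cast hrq
  have ht1 : 1 ≤ t := by nlinarith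
  have htp : t < p := by nlinarith
  refine ⟨r, t.toNat, hrpos, hrq, ?_, ?_, ?_⟩
  · omega
  · omega
  · have : (r : ℤ) * p + t.toNat * q = p * q + 1 := by
      rw [Int.toNat_of_nonneg (by omega)]; linarith
    exact_mod_cast this

/-- Key polynomial identity. -/
lemma ring_id (a b : ℕ) :
    ((X : ℤ[X]) ^ (a + 1) - 1) * ((X : ℤ[X]) ^ (b + 1) - 1) -
      X * (((X : ℤ[X]) ^ b - 1) * ((X : ℤ[X]) ^ a - 1)) =
    ((X : ℤ[X]) ^ (a + b + 1) - 1) * (X - 1) := by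
  ring

/-- Multiplying the double geometric-type sum by `(X^p-1)(X^q-1)`. -/
lemma sum_pow_mul (p q r s c : ℕ) :
    (∑ x ∈ range r ×ˢ range s, (X : ℤ[X]) ^ (x.1 * p + x.2 * q + c)) *
        (((X : ℤ[X]) ^ p - 1) * ((X : ℤ[X]) ^ q - 1)) =
      X ^ c * (((X : ℤ[X]) ^ (r * p) - 1) * ((X : ℤ[X]) ^ (s * q) - 1)) := by
  have h1 : ∑ x ∈ range r ×ˢ range s, (X : ℤ[X]) ^ (x.1 * p + x.2 * q + c)
      = X ^ c * ((∑ i ∈ range r, ((X : ℤ[X]) ^ p) ^ i) *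
        (∑ j ∈ range s, ((X : ℤ[X]) ^ q) ^ j)) := by
    rw [Finset.sum_mul_sum, Finset.mul_sum, Finset.sum_product]
    refine Finset.sum_congr rfl fun i _ => ?_
    rw [Finset.mul_sum]
    refine Finset.sum_congr rfl fun j _ => ?_
    rw [← pow_mul, ← pow_mul, ← pow_add, ← pow_add]
    ring_nf
  rw [h1]
  have h2 : X ^ c * ((∑ i ∈ range r, ((X : ℤ[X]) ^ p) ^ i) *
        (∑ j ∈ range s, ((X : ℤ[X]) ^ q) ^ j)) *
        (((X : ℤ[X]) ^ p - 1) * ((X : ℤ[X]) ^ q - 1))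
      = X ^ c * (((∑ i ∈ range r, ((X : ℤ[X]) ^ p) ^ i) * ((X : ℤ[X]) ^ p - 1)) *
        ((∑ j ∈ range s, ((X : ℤ[X]) ^ q) ^ j) * ((X : ℤ[X]) ^ q - 1))) := by ring
  rw [h2, geom_sum_mul, geom_sum_mul, ← pow_mul, ← pow_mul, mul_comm p r, mul_comm q s]

lemma inj_lemma (p q : ℕ) (hp : p.Prime) (hq : q.Prime) (hpq : p ≠ q)
    {i j i' j' : ℕ} (hi : i < q) (hi' : i' < q)
    (h : i * p + j * q = i' * p + j' * q) : i = i' ∧ j = j' := by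
  have hz : (i : ℤ) * p + j * q = i' * p + j' * q := by exact_mod_cast h
  have hdvd : (q : ℤ) ∣ ((i' : ℤ) - i) * p := ⟨(j : ℤ) - j', by linear_combination -hz⟩
  have hqprime : Prime (q : ℤ) := Nat.prime_iff_prime_int.mp hq
  have hqp : ¬(q : ℤ) ∣ (p : ℤ) := by
    rw [Int.natCast_dvd_natCast]
    exact fun hd => hpq ((Nat.prime_dvd_prime_iff_eq hq hp).mp hd).symm
  have hdvd2 : (q : ℤ) ∣ ((i' : ℤ) - i) := (hqprime.dvd_mul.mp hdvd).resolve_right hqp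
  obtain ⟨k, hk⟩ := hdvd2
  have hq0 : (0 : ℤ) < q := by exact_mod_cast hq.pos
  have hiz : (i : ℤ) < q := by exact_mod_cast hi
  have hiz' : (i' : ℤ) < q := by exact_mod_cast hi'
  have hi0 : (0 : ℤ) ≤ i := Int.natCast_nonneg i
  have hi0' : (0 : ℤ) ≤ i' := Int.natCast_nonneg i'
  have hk0 : k = 0 := by
    rcases lt_trichotomy k 0 with h' | h' | h'
    · nlinarith
    · exact h'
    · nlinarith
  have hii : i = i' := by
    rw [hk0, mul_zero] at hk
    exact_mod_cast (by linarith : (i : ℤ) = i')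
  refine ⟨hii, ?_⟩
  subst hii
  have : j * q = j' * q := by omega
  exact Nat.eq_of_mul_eq_mul_right hq.pos this

lemma disj_lemma (p q r s : ℕ) (hp : p.Prime) (hq : q.Prime) (hpq : p ≠ q)
    (hrs : r * p + s * q = p * q + 1)
    {i j i' j' : ℕ} (hi : i < r) (hi' : i' < q - r) (hrq : r < q)
    (h : i * p + j * q = i' * p + j' * q + 1) : False := by
  have hz : (i : ℤ) * p + j * q = i' * p + j' * q + 1 := by exact_mod_cast h
  have hrsz : (r : ℤ) * p + s * q = p * q + 1 := by exact_mod_cast hrs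
  have hdvd : (q : ℤ) ∣ ((i : ℤ) - i' - r) * p :=
    ⟨-(p : ℤ) - j + j' + s, by linear_combination hz - hrsz⟩
  have hqprime : Prime (q : ℤ) := Nat.prime_iff_prime_int.mp hq
  have hqp : ¬(q : ℤ) ∣ (p : ℤ) := by
    rw [Int.natCast_dvd_natCast]
    exact fun hd => hpq ((Nat.prime_dvd_prime_iff_eq hq hp).mp hd).symm
  obtain ⟨k, hk⟩ := (hqprime.dvd_mul.mp hdvd).resolve_right hqp
  have hq0 : (0 : ℤ) < q := by exact_mod_cast hq.pos
  have h1 : (i : ℤ) < r := by exact_mod_cast hi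
  have h2 : (i' : ℤ) < q - r := by
    have : (i' : ℤ) < ((q - r : ℕ) : ℤ) := by exact_mod_cast hi'
    have : ((q - r : ℕ) : ℤ) = (q : ℤ) - r := by
      rw [Nat.cast_sub hrq.le]
    omega
  have hi0 : (0 : ℤ) ≤ i := Int.natCast_nonneg i
  have hi0' : (0 : ℤ) ≤ i' := Int.natCast_nonneg i'
  -- w = i - i' - r ∈ (-q, 0), but q ∣ w
  rcases lt_trichotomy k 0 with h' | h' | h'
  · nlinarith
  · rw [h', mul_zero] at hk; omega
  · nlinarith

/-- `A n` is the largest absolute value of a coefficient of the `n`-th cyclotomic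
polynomial (over `ℤ`). -/
noncomputable def cycCoeffMax (n : ℕ) : ℕ :=
  (Finset.range (Nat.totient n + 1)).sup fun i => ((Polynomial.cyclotomic n ℤ).coeff i).natAbs


/-- For distinct primes `p` and `q`, `A(pq) = 1`. -/
theorem A_pq_eq_one (p q : ℕ) (hp : p.Prime) (hq : q.Prime) (hpq : p ≠ q) :
    cycCoeffMax (p * q) = 1 := by
  obtain ⟨r, s, hr1, hrq, hs1, hsp, hrs⟩ := exists_rs p q hp hq hpq
  set F : ℤ[X] := (∑ x ∈ range r ×ˢ range s, X ^ (x.1 * p + x.2 * q)) -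
      (∑ x ∈ range (q - r) ×ˢ range (p - s), X ^ (x.1 * p + x.2 * q + 1)) with hF
  -- arithmetic facts
  have ha : r * p = (p - s) * q + 1 := by zify [hsp.le, hrq.le]; nlinarith
  have hb : s * q = (q - r) * p + 1 := by zify [hsp.le, hrq.le]; nlinarith
  have hab : (p - s) * q + (q - r) * p + 1 = p * q := by zify [hsp.le, hrq.le]; nlinarith
  -- key identity for F
  have key : F * (((X : ℤ[X]) ^ p - 1) * ((X : ℤ[X]) ^ q - 1)) =
      ((X : ℤ[X]) ^ (p * q) - 1) * (X - 1) := by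
    rw [hF, sub_mul]
    have h0 : (∑ x ∈ range r ×ˢ range s, (X : ℤ[X]) ^ (x.1 * p + x.2 * q)) =
        ∑ x ∈ range r ×ˢ range s, (X : ℤ[X]) ^ (x.1 * p + x.2 * q + 0) := by
      simp
    rw [h0, sum_pow_mul, sum_pow_mul, pow_zero, one_mul, pow_one, ha, hb, ← hab]
    exact ring_id ((p - s) * q) ((q - r) * p)
  -- cyclotomic satisfies same identity
  haveI : Fact p.Prime := ⟨hp⟩
  haveI : Fact q.Prime := ⟨hq⟩
  have hqp : ¬q ∣ p := fun hd => hpq ((Nat.prime_dvd_prime_iff_eq hq hp).mp hd).symm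
  have hexp : Polynomial.expand ℤ q (cyclotomic p ℤ) = cyclotomic (p * q) ℤ * cyclotomic p ℤ :=
    cyclotomic_expand_eq_cyclotomic_mul hq hqp ℤ
  have hΦ : cyclotomic (p * q) ℤ * (((X : ℤ[X]) ^ p - 1) * ((X : ℤ[X]) ^ q - 1)) =
      ((X : ℤ[X]) ^ (p * q) - 1) * (X - 1) := by
    have e1 : ((X : ℤ[X]) ^ p - 1) = cyclotomic p ℤ * (X - 1) :=
      (cyclotomic_prime_mul_X_sub_one ℤ p).symm
    have e2 : Polynomial.expand ℤ q (cyclotomic p ℤ * (X - 1)) = (X : ℤ[X]) ^ (p * q) - 1 := by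
      rw [← e1, map_sub, map_one, map_pow, Polynomial.expand_X, ← pow_mul, mul_comm q p]
    have e3 : Polynomial.expand ℤ q ((X : ℤ[X]) - 1) = (X : ℤ[X]) ^ q - 1 := by
      rw [map_sub, map_one, Polynomial.expand_X]
    calc cyclotomic (p * q) ℤ * (((X : ℤ[X]) ^ p - 1) * ((X : ℤ[X]) ^ q - 1))
        = (cyclotomic (p * q) ℤ * cyclotomic p ℤ) *
            (Polynomial.expand ℤ q ((X : ℤ[X]) - 1)) * (X - 1) := by rw [e1, e3]; ring
      _ = Polynomial.expand ℤ q (cyclotomic p ℤ * (X - 1)) * (X - 1) := by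
          rw [← hexp, ← map_mul]
      _ = ((X : ℤ[X]) ^ (p * q) - 1) * (X - 1) := by rw [e2]
  -- cancel
  have hne : (((X : ℤ[X]) ^ p - 1) * ((X : ℤ[X]) ^ q - 1)) ≠ 0 := by
    have h1 : ((X : ℤ[X]) ^ p - 1) ≠ 0 := by
      have := monic_X_pow_sub_C (1 : ℤ) hp.ne_zero
      simpa using this.ne_zero
    have h2 : ((X : ℤ[X]) ^ q - 1) ≠ 0 := by
      have := monic_X_pow_sub_C (1 : ℤ) hq.ne_zero
      simpa using this.ne_zero
    exact mul_ne_zero h1 h2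
  have hFΦ : cyclotomic (p * q) ℤ = F := (mul_right_cancel₀ hne (hΦ.trans key.symm))
  -- coefficient bound
  have hbound : ∀ k, ((cyclotomic (p * q) ℤ).coeff k).natAbs ≤ 1 := by
    intro k
    rw [hFΦ, hF, coeff_sub, finset_sum_coeff, finset_sum_coeff]
    simp only [coeff_X_pow]
    rw [Finset.sum_boole, Finset.sum_boole]
    set c1 := ((range r ×ˢ range s).filter fun x => k = x.1 * p + x.2 * q).card with hc1d
    set c2 := ((range (q - r) ×ˢ range (p - s)).filter
      fun x => k = x.1 * p + x.2 * q + 1).card with hc2d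
    have hc1 : c1 ≤ 1 := by
      rw [hc1d, Finset.card_le_one]
      rintro ⟨i, j⟩ h1 ⟨i', j'⟩ h2
      simp only [Finset.mem_filter, Finset.mem_product, Finset.mem_range] at h1 h2
      obtain ⟨hij, hji⟩ := inj_lemma p q hp hq hpq (lt_trans h1.1.1 hrq)
        (lt_trans h2.1.1 hrq) (h1.2.symm.trans h2.2)
      simp [hij, hji]
    have hc2 : c2 ≤ 1 := by
      rw [hc2d, Finset.card_le_one]
      rintro ⟨i, j⟩ h1 ⟨i', j'⟩ h2
      simp only [Finset.mem_filter, Finset.mem_product, Finset.mem_range] at h1 h2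
      have : i * p + j * q = i' * p + j' * q := by omega
      obtain ⟨hij, hji⟩ := inj_lemma p q hp hq hpq
        (lt_of_lt_of_le h1.1.1 (Nat.sub_le q r)) (lt_of_lt_of_le h2.1.1 (Nat.sub_le q r)) this
      simp [hij, hji]
    have hdisj : c1 = 0 ∨ c2 = 0 := by
      by_contra hcon
      push_neg at hcon
      obtain ⟨x1, hx1⟩ := Finset.card_pos.mp (Nat.pos_of_ne_zero hcon.1)
      obtain ⟨x2, hx2⟩ := Finset.card_pos.mp (Nat.pos_of_ne_zero hcon.2)
      simp only [Finset.mem_filter, Finset.mem_product, Finset.mem_range] at hx1 hx2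
      exact disj_lemma p q r s hp hq hpq hrs hx1.1.1 hx2.1.1 hrq
        (hx1.2.symm.trans hx2.2)
    omega
  -- leading coefficient is 1
  have hlead : (cyclotomic (p * q) ℤ).coeff (Nat.totient (p * q)) = 1 := by
    rw [← natDegree_cyclotomic (p * q) ℤ]
    exact (cyclotomic.monic (p * q) ℤ).coeff_natDegree
  unfold cycCoeffMax
  refine le_antisymm (Finset.sup_le fun i _ => hbound i) ?_
  have hmem : Nat.totient (p * q) ∈ Finset.range (Nat.totient (p * q) + 1) :=
    Finset.self_mem_range_succ _
  have := Finset.le_sup (f := fun i => ((cyclotomic (p * q) ℤ).coeff i).natAbs) hmem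
  simp only [hlead] at this
  simpa using this
end
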